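/- arXiv:2109.13390 — 9 statements merged into one kernel-verified Lean document; each statement's English description precedes it below -/
import Mathlib

section
/- If F_k is a polynomial satisfying (1-x^2)F_k'' - 4xF_k' + λ_k F_k = 0 with λ_k = k(k+3), then for x ∈ (-1,1), (1-x^2) · d^3/dx^3[(1-x^2)^2 F_k'(x)] = (λ_k^2 + 2λ_k)(1-x^2) F_k(x). -/
open Polynomial

lemma deriv_poly_eval (G : Polynomial ℝ) :
    deriv (fun y : ℝ => Polynomial.eval y G) = fun x => Polynomial.eval x (derivative G) := by
  funext x
  exact Polynomial.deriv (p := G)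

lemma iteratedDeriv3_poly_eval (G : Polynomial ℝ) (x : ℝ) :
    iteratedDeriv 3 (fun y : ℝ => Polynomial.eval y G) x
      = Polynomial.eval x (derivative (derivative (derivative G))) := by
  rw [show (3:ℕ) = 2+1 from rfl, iteratedDeriv_succ, show (2:ℕ) = 1+1 from rfl,
    iteratedDeriv_succ, iteratedDeriv_one, deriv_poly_eval, deriv_poly_eval, deriv_poly_eval]

/-- If a polynomial `F` satisfies `(1-x²)F'' - 4xF' + λ_k F = 0` with `λ_k = k(k+3)`, then
`(1-x²)·[(1-x²)² F']''' = (λ_k² + 2λ_k)(1-x²) F` on `(-1,1)`. -/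
theorem gegenbauer_paneitz_eigen (k : ℕ)
    (F : ℝ → ℝ) (p : Polynomial ℝ) (hFp : ∀ x : ℝ, F x = p.eval x)
    (hode : ∀ x : ℝ,
      (1 - x ^ 2) * deriv (deriv F) x - 4 * x * deriv F x
        + (k : ℝ) * ((k : ℝ) + 3) * F x = 0) :
    ∀ x ∈ Set.Ioo (-1 : ℝ) 1,
      (1 - x ^ 2) * iteratedDeriv 3 (fun y : ℝ => (1 - y ^ 2) ^ 2 * deriv F y) x
        = (((k : ℝ) * ((k : ℝ) + 3)) ^ 2 + 2 * ((k : ℝ) * ((k : ℝ) + 3)))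
            * (1 - x ^ 2) * F x := by
  set l : ℝ := (k : ℝ) * ((k : ℝ) + 3) with hl
  have hF : F = fun x => Polynomial.eval x p := funext hFp
  have hd1 : deriv F = fun x => Polynomial.eval x (derivative p) := by
    rw [hF, deriv_poly_eval]
  have hd2 : deriv (deriv F) = fun x => Polynomial.eval x (derivative (derivative p)) := by
    rw [hd1, deriv_poly_eval]
  -- polynomial ODE
  have hq : (1 - X^2) * derivative (derivative p) - 4 * X * derivative p + C l * p = 0 := by
    apply Polynomial.funext
    intro x
    have := hode x
    rw [hd2, hd1, hF] at this
    simp only [eval_add, eval_sub, eval_mul, eval_one, eval_pow, eval_X, eval_C, eval_ofNat,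
      eval_zero]
    linarith [this]
  have e2 : (1 - X^2) * derivative (derivative (derivative p))
      - 6 * X * derivative (derivative p) + (C l - 4) * derivative p = 0 := by
    have := congrArg derivative hq
    simp only [derivative_add, derivative_sub, derivative_mul, derivative_one, derivative_pow,
      derivative_X, derivative_C, derivative_ofNat, derivative_zero, C_eq_natCast, Nat.cast_ofNat, map_ofNat, derivative_natCast, Nat.cast_one] at this
    linear_combination this
  have e3 : (1 - X^2) * derivative (derivative (derivative (derivative p)))
      - 8 * X * derivative (derivative (derivative p))
      + (C l - 10) * derivative (derivative p) = 0 := by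
    have := congrArg derivative e2
    simp only [derivative_add, derivative_sub, derivative_mul, derivative_one, derivative_pow,
      derivative_X, derivative_C, derivative_ofNat, derivative_zero, C_eq_natCast, Nat.cast_ofNat, map_ofNat, derivative_natCast, Nat.cast_one] at this
    linear_combination this
  -- the key polynomial identity
  have key : derivative (derivative (derivative ((1 - X^2)^2 * derivative p)))
      = C (l^2 + 2*l) * p := by
    simp only [derivative_mul, derivative_pow, derivative_sub, derivative_one, derivative_X,
      derivative_add, derivative_C, derivative_zero, derivative_ofNat, C_eq_natCast, Nat.cast_ofNat, map_ofNat, derivative_natCast, Nat.cast_one, map_add, map_sub, map_mul, map_pow, C_1, mul_zero, zero_mul, add_zero, zero_add]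
    linear_combination (-(C l + 2)) * hq + (-4*X) * e2 + (1 - X^2) * e3
  intro x _
  have hfun : (fun y : ℝ => (1 - y ^ 2) ^ 2 * deriv F y)
      = fun y => Polynomial.eval y ((1 - X^2)^2 * derivative p) := by
    funext y
    rw [hd1]
    simp
  rw [hfun, iteratedDeriv3_poly_eval, key, hFp x]
  simp only [eval_mul, eval_C]
  ring
end

section
/- Let G : [-1,1] → ℝ be a smooth function with G(±1) = 0. Then ∫_{-1}^1 [(1-x^2)G]'''(x) (1-x^2) G(x)^2 dx = ∫_{-1}^1 (1-x^2)^2 (G'(x))^3 dx. -/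
/-- For smooth `G` on `[-1,1]` with `G(±1)=0`:
`∫_{-1}^1 [(1-x²)G]''' (1-x²) G² dx = ∫_{-1}^1 (1-x²)² (G')³ dx`. -/
theorem integral_third_deriv_square (G : ℝ → ℝ)
    (hG : ContDiff ℝ (⊤ : ℕ∞) G) (hGm : G (-1) = 0) (hGp : G 1 = 0) :
    ∫ x in (-1 : ℝ)..1,
        iteratedDeriv 3 (fun y : ℝ => (1 - y ^ 2) * G y) x * ((1 - x ^ 2) * G x ^ 2)
      = ∫ x in (-1 : ℝ)..1, (1 - x ^ 2) ^ 2 * (deriv G x) ^ 3 := by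
  have hG' : ContDiff ℝ (⊤ : ℕ∞) G := hG.of_le (by simp)
  have hg1 : ContDiff ℝ (⊤ : ℕ∞) (deriv G) := (contDiff_infty_iff_deriv.mp hG').2
  have hg2 : ContDiff ℝ (⊤ : ℕ∞) (deriv (deriv G)) := (contDiff_infty_iff_deriv.mp hg1).2
  have hg3 : ContDiff ℝ (⊤ : ℕ∞) (deriv (deriv (deriv G))) := (contDiff_infty_iff_deriv.mp hg2).2
  set g1 := deriv G with hg1d
  set g2 := deriv g1 with hg2d
  set g3 := deriv g2 with hg3d
  have hdG : ∀ x, HasDerivAt G (g1 x) x := fun x => (hG'.differentiable (by simp) x).hasDerivAt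
  have hd1 : ∀ x, HasDerivAt g1 (g2 x) x := fun x => (hg1.differentiable (by simp) x).hasDerivAt
  have hd2 : ∀ x, HasDerivAt g2 (g3 x) x := fun x => (hg2.differentiable (by simp) x).hasDerivAt
  have hw : ∀ x : ℝ, HasDerivAt (fun y : ℝ => 1 - y ^ 2) (-(2 * x)) x := by
    intro x
    simpa using (hasDerivAt_pow 2 x).const_sub 1
  -- first derivative of F = (1-x²)G
  have hF1 : ∀ x, HasDerivAt (fun y : ℝ => (1 - y ^ 2) * G y)
      (-(2 * x) * G x + (1 - x ^ 2) * g1 x) x := fun x => (hw x).mul (hdG x)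
  have hF1' : deriv (fun y : ℝ => (1 - y ^ 2) * G y)
      = fun x => -(2 * x) * G x + (1 - x ^ 2) * g1 x := funext fun x => (hF1 x).deriv
  -- second derivative
  have hF2 : ∀ x, HasDerivAt (fun x : ℝ => -(2 * x) * G x + (1 - x ^ 2) * g1 x)
      (-2 * G x + -(2 * x) * g1 x + (-(2 * x) * g1 x + (1 - x ^ 2) * g2 x)) x := by
    intro x
    have h1 : HasDerivAt (fun y : ℝ => -(2 * y)) (-2) x := by
      simpa using ((hasDerivAt_id x).const_mul (2 : ℝ)).fun_neg
    exact ((h1.mul (hdG x)).add ((hw x).mul (hd1 x)))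
  have hF2' : deriv (fun x : ℝ => -(2 * x) * G x + (1 - x ^ 2) * g1 x)
      = fun x => -2 * G x + -(2 * x) * g1 x + (-(2 * x) * g1 x + (1 - x ^ 2) * g2 x) :=
    funext fun x => (hF2 x).deriv
  -- third derivative
  have hF3 : ∀ x, HasDerivAt
      (fun x : ℝ => -2 * G x + -(2 * x) * g1 x + (-(2 * x) * g1 x + (1 - x ^ 2) * g2 x))
      (-6 * g1 x - 6 * x * g2 x + (1 - x ^ 2) * g3 x) x := by
    intro x
    have h1 : HasDerivAt (fun y : ℝ => -(2 * y)) (-2) x := by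
      simpa using ((hasDerivAt_id x).const_mul (2 : ℝ)).fun_neg
    have := (((hdG x).const_mul (-2)).fun_add (h1.fun_mul (hd1 x))).fun_add
      ((h1.fun_mul (hd1 x)).fun_add ((hw x).fun_mul (hd2 x)))
    exact this.congr_deriv (by ring)
  have hF3' : deriv (fun x : ℝ => -2 * G x + -(2 * x) * g1 x
      + (-(2 * x) * g1 x + (1 - x ^ 2) * g2 x))
      = fun x => -6 * g1 x - 6 * x * g2 x + (1 - x ^ 2) * g3 x :=
    funext fun x => (hF3 x).deriv
  have hiter : iteratedDeriv 3 (fun y : ℝ => (1 - y ^ 2) * G y)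
      = fun x => -6 * g1 x - 6 * x * g2 x + (1 - x ^ 2) * g3 x := by
    rw [show (3 : ℕ) = 2 + 1 from rfl, iteratedDeriv_succ,
      show (2 : ℕ) = 1 + 1 from rfl, iteratedDeriv_succ, iteratedDeriv_one,
      hF1', hF2', hF3']
  -- the antiderivative of the difference of integrands
  set H : ℝ → ℝ := fun x => (1 - x ^ 2) ^ 2 * G x ^ 2 * g2 x
      - (1 - x ^ 2) ^ 2 * G x * g1 x ^ 2 - 2 * x * (1 - x ^ 2) * G x ^ 2 * g1 x
      - (4 / 3) * G x ^ 3 with hHdef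
  have hH : ∀ x, HasDerivAt H
      ((-6 * g1 x - 6 * x * g2 x + (1 - x ^ 2) * g3 x) * ((1 - x ^ 2) * G x ^ 2)
        - (1 - x ^ 2) ^ 2 * g1 x ^ 3) x := by
    intro x
    have hw2 : HasDerivAt (fun y : ℝ => (1 - y ^ 2) ^ 2)
        ((2 : ℕ) * (1 - x ^ 2) ^ 1 * -(2 * x)) x := (hw x).pow 2
    have hG2 : HasDerivAt (fun y : ℝ => G y ^ 2) ((2 : ℕ) * G x ^ 1 * g1 x) x := (hdG x).pow 2
    have hG3 : HasDerivAt (fun y : ℝ => G y ^ 3) ((3 : ℕ) * G x ^ 2 * g1 x) x := (hdG x).pow 3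
    have hg12 : HasDerivAt (fun y : ℝ => g1 y ^ 2) ((2 : ℕ) * g1 x ^ 1 * g2 x) x :=
      (hd1 x).pow 2
    have hx : HasDerivAt (fun y : ℝ => 2 * y) (2 : ℝ) x := by
      simpa using (hasDerivAt_id x).const_mul (2 : ℝ)
    have hA := (hw2.fun_mul hG2).fun_mul (hd2 x)
    have hB := (hw2.fun_mul (hdG x)).fun_mul hg12
    have hC := ((hx.fun_mul (hw x)).fun_mul hG2).fun_mul (hd1 x)
    have hD := hG3.const_mul (4 / 3 : ℝ)
    have := ((hA.fun_sub hB).fun_sub hC).fun_sub hD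
    exact this.congr_deriv (by push_cast; ring)
  -- boundary values vanish
  have hHp : H 1 = 0 := by simp [hHdef, hGp]
  have hHm : H (-1) = 0 := by simp [hHdef, hGm]
  -- continuity of everything
  have cG := hG'.continuous
  have c1 := hg1.continuous
  have c2 := hg2.continuous
  have c3 := hg3.continuous
  have cD : Continuous (fun x : ℝ =>
      (-6 * g1 x - 6 * x * g2 x + (1 - x ^ 2) * g3 x) * ((1 - x ^ 2) * G x ^ 2)
        - (1 - x ^ 2) ^ 2 * g1 x ^ 3) := by fun_prop
  have cL : Continuous (fun x : ℝ =>
      (-6 * g1 x - 6 * x * g2 x + (1 - x ^ 2) * g3 x) * ((1 - x ^ 2) * G x ^ 2)) := by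
    fun_prop
  have cR : Continuous (fun x : ℝ => (1 - x ^ 2) ^ 2 * g1 x ^ 3) := by fun_prop
  have key : ∫ x in (-1 : ℝ)..1,
      ((-6 * g1 x - 6 * x * g2 x + (1 - x ^ 2) * g3 x) * ((1 - x ^ 2) * G x ^ 2)
        - (1 - x ^ 2) ^ 2 * g1 x ^ 3) = H 1 - H (-1) :=
    intervalIntegral.integral_eq_sub_of_hasDerivAt (fun x _ => hH x)
      (cD.intervalIntegrable (-1) 1)
  rw [intervalIntegral.integral_sub (cL.intervalIntegrable (-1) 1) (cR.intervalIntegrable (-1) 1),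
    hHp, hHm, sub_zero] at key
  calc ∫ x in (-1 : ℝ)..1,
        iteratedDeriv 3 (fun y : ℝ => (1 - y ^ 2) * G y) x * ((1 - x ^ 2) * G x ^ 2)
      = ∫ x in (-1 : ℝ)..1,
        (-6 * g1 x - 6 * x * g2 x + (1 - x ^ 2) * g3 x) * ((1 - x ^ 2) * G x ^ 2) := by
        rw [hiter]
    _ = ∫ x in (-1 : ℝ)..1, (1 - x ^ 2) ^ 2 * g1 x ^ 3 := by linarith
end

section
/- Let G : [-1,1] → ℝ be a smooth function with G(±1) = 0. Then ∫_{-1}^1 (1-x^2)^2 G(x) [(1-x^2)G(x)]''''(x) dx = ∫_{-1}^1 (1-x^2) G(x) [(1-x^2)^2 G'(x)]'''(x) dx + 6 ∫_{-1}^1 |[(1-x^2)G(x)]'|^2 dx. -/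
/-- For smooth `G` on `[-1,1]` with `G(±1)=0`:
`∫ (1-x²)² G [(1-x²)G]'''' = ∫ (1-x²) G [(1-x²)²G']''' + 6 ∫ |[(1-x²)G]'|²`. -/
theorem integral_fourth_deriv_bilinear (G : ℝ → ℝ)
    (hG : ContDiff ℝ (⊤ : ℕ∞) G) (hGm : G (-1) = 0) (hGp : G 1 = 0) :
    ∫ x in (-1 : ℝ)..1,
        (1 - x ^ 2) ^ 2 * G x * iteratedDeriv 4 (fun y : ℝ => (1 - y ^ 2) * G y) x
      = (∫ x in (-1 : ℝ)..1,
          (1 - x ^ 2) * G x * iteratedDeriv 3 (fun y : ℝ => (1 - y ^ 2) ^ 2 * deriv G y) x)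
        + 6 * ∫ x in (-1 : ℝ)..1,
            (deriv (fun y : ℝ => (1 - y ^ 2) * G y) x) ^ 2 := by
  set u : ℝ → ℝ := fun y => (1 - y ^ 2) * G y with hu_def
  have hGd : Differentiable ℝ G := hG.differentiable (by simp)
  have hu : ContDiff ℝ ((⊤ : ℕ∞) : WithTop ℕ∞) u :=
    (contDiff_const.sub (contDiff_id.pow 2)).mul (hG.of_le (by simp))
  have hd : ∀ n, Differentiable ℝ (deriv^[n] u) := fun n =>
    (hu.iterate_deriv n).differentiable (by simp)
  have hc : ∀ n, Continuous (deriv^[n] u) := fun n => (hd n).continuous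
  have hD : ∀ (n : ℕ) (x : ℝ), HasDerivAt (deriv^[n] u) (deriv^[n + 1] u x) x := by
    intro n x
    have e : deriv^[n + 1] u = deriv (deriv^[n] u) := Function.iterate_succ_apply' deriv n u
    rw [e]
    exact ((hd n) x).hasDerivAt
  have hD0 : ∀ x : ℝ, HasDerivAt u (deriv u x) x := fun x => ((hd 0) x).hasDerivAt
  have hD1 : ∀ x : ℝ, HasDerivAt (deriv u) (deriv^[2] u x) x := fun x => hD 1 x
  -- formula for the first derivative of u
  have hu1 : ∀ x : ℝ, HasDerivAt u (-2 * x * G x + (1 - x ^ 2) * deriv G x) x := by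
    intro x
    have h : HasDerivAt (fun y : ℝ => (1 - y ^ 2) * G y)
        (-(2 * x ^ 1) * G x + (1 - x ^ 2) * deriv G x) x :=
      ((hasDerivAt_pow 2 x).const_sub 1).mul (hGd x).hasDerivAt
    convert h using 1
    ring
  have hderiv_u : ∀ x : ℝ, deriv u x = -2 * x * G x + (1 - x ^ 2) * deriv G x :=
    fun x => (hu1 x).deriv
  -- boundary values
  have hu_m : u (-1) = 0 := by simp [hu_def]
  have hu_p : u 1 = 0 := by simp [hu_def]
  have hu1_m : deriv u (-1) = 0 := by rw [hderiv_u]; simp [hGm]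
  have hu1_p : deriv u 1 = 0 := by rw [hderiv_u]; simp [hGp]
  -- the second integrand's inner function in terms of u
  have hv : (fun y : ℝ => (1 - y ^ 2) ^ 2 * deriv G y)
      = fun y : ℝ => (1 - y ^ 2) * deriv u y + 2 * y * u y := by
    funext y
    rw [hderiv_u y]
    simp only [hu_def]
    ring
  -- first derivative of v
  have h1 : deriv (fun y : ℝ => (1 - y ^ 2) * deriv u y + 2 * y * u y)
      = fun x : ℝ => (1 - x ^ 2) * deriv^[2] u x + 2 * u x := by
    funext x
    refine HasDerivAt.deriv ?_
    have ha := (((hasDerivAt_pow 2 x).const_sub 1).mul (hD1 x)).add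
      ((((hasDerivAt_id x).const_mul 2)).mul (hD0 x))
    convert ha using 1
    · rfl
    simp only [id_eq, pow_one, Nat.reduceAdd, Nat.reduceSub, Nat.cast_ofNat]
    ring
  -- second derivative of v
  have h2 : deriv (fun x : ℝ => (1 - x ^ 2) * deriv^[2] u x + 2 * u x)
      = fun x : ℝ => -2 * x * deriv^[2] u x + (1 - x ^ 2) * deriv^[3] u x
          + 2 * deriv u x := by
    funext x
    refine HasDerivAt.deriv ?_
    have ha := (((hasDerivAt_pow 2 x).const_sub 1).mul (hD 2 x)).add ((hD0 x).const_mul 2)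
    convert ha using 1
    · rfl
    simp only [id_eq, pow_one, Nat.reduceAdd, Nat.reduceSub, Nat.cast_ofNat]
    ring
  -- third derivative of v
  have h3 : deriv (fun x : ℝ => -2 * x * deriv^[2] u x + (1 - x ^ 2) * deriv^[3] u x
          + 2 * deriv u x)
      = fun x : ℝ => (1 - x ^ 2) * deriv^[4] u x - 4 * x * deriv^[3] u x := by
    funext x
    refine HasDerivAt.deriv ?_
    have ha := ((((hasDerivAt_id x).const_mul (-2)).mul (hD 2 x)).add
        (((hasDerivAt_pow 2 x).const_sub 1).mul (hD 3 x))).add ((hD1 x).const_mul 2)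
    convert ha using 1
    · rfl
    simp only [id_eq, pow_one, Nat.reduceAdd, Nat.reduceSub, Nat.cast_ofNat]
    ring
  have hB : ∀ x : ℝ, iteratedDeriv 3 (fun y : ℝ => (1 - y ^ 2) ^ 2 * deriv G y) x
      = (1 - x ^ 2) * deriv^[4] u x - 4 * x * deriv^[3] u x := by
    intro x
    rw [hv]
    have e : iteratedDeriv 3 (fun y : ℝ => (1 - y ^ 2) * deriv u y + 2 * y * u y)
        = deriv (deriv (deriv (fun y : ℝ => (1 - y ^ 2) * deriv u y + 2 * y * u y))) := by
      rw [iteratedDeriv_eq_iterate]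
      rfl
    rw [e, h1, h2, h3]
  -- the exact antiderivative for the remainder term
  set F : ℝ → ℝ := fun x =>
    4 * (x * u x * deriv^[2] u x - u x * deriv u x - x * (deriv u x) ^ 2 / 2) with hF_def
  have hF : ∀ x : ℝ, HasDerivAt F
      (4 * x * u x * deriv^[3] u x - 6 * (deriv u x) ^ 2) x := by
    intro x
    have p1 := (((hasDerivAt_id x).mul (hD0 x)).mul (hD 2 x))
    have p2 := (hD0 x).mul (hD1 x)
    have p3 := ((hasDerivAt_id x).mul ((hD1 x).pow 2)).div_const 2
    have ha := (((p1.sub p2).sub p3).const_mul 4)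
    refine ha.congr_deriv ?_
    simp only [id_eq, pow_one, Nat.reduceAdd, Nat.reduceSub, Nat.cast_ofNat, Pi.mul_apply, Pi.pow_apply]
    ring
  have hcd1 : Continuous (deriv u) := hc 1
  have hZcont : Continuous (fun x : ℝ => 4 * x * u x * deriv^[3] u x - 6 * (deriv u x) ^ 2) := by
    have := hc 0
    have := hc 3
    fun_prop
  have hzero : ∫ x in (-1 : ℝ)..1,
      (4 * x * u x * deriv^[3] u x - 6 * (deriv u x) ^ 2) = 0 := by
    rw [intervalIntegral.integral_eq_sub_of_hasDerivAt (fun x _ => hF x)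
      (hZcont.intervalIntegrable _ _)]
    simp [hF_def, hu_m, hu_p, hu1_m, hu1_p]
  -- rewrite the goal
  rw [show iteratedDeriv 4 u = deriv^[4] u from iteratedDeriv_eq_iterate]
  have hBint : (∫ x in (-1 : ℝ)..1,
        (1 - x ^ 2) * G x * iteratedDeriv 3 (fun y : ℝ => (1 - y ^ 2) ^ 2 * deriv G y) x)
      = ∫ x in (-1 : ℝ)..1,
        (1 - x ^ 2) * G x * ((1 - x ^ 2) * deriv^[4] u x - 4 * x * deriv^[3] u x) :=
    intervalIntegral.integral_congr fun x _ => by rw [hB x]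
  rw [hBint]
  have hcont1 : Continuous (fun x : ℝ =>
      (1 - x ^ 2) * G x * ((1 - x ^ 2) * deriv^[4] u x - 4 * x * deriv^[3] u x)) := by
    have := hc 3
    have := hc 4
    have := hG.continuous
    fun_prop
  have hcont2 : Continuous (fun x : ℝ => (6 : ℝ) * (deriv u x) ^ 2) := by
    fun_prop
  have hsplit : (∫ x in (-1 : ℝ)..1, (1 - x ^ 2) ^ 2 * G x * deriv^[4] u x)
      = ∫ x in (-1 : ℝ)..1,
          ((1 - x ^ 2) * G x * ((1 - x ^ 2) * deriv^[4] u x - 4 * x * deriv^[3] u x)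
            + 6 * (deriv u x) ^ 2
            + (4 * x * u x * deriv^[3] u x - 6 * (deriv u x) ^ 2)) := by
    refine intervalIntegral.integral_congr fun x _ => ?_
    simp only [hu_def]
    ring
  rw [hsplit,
    intervalIntegral.integral_add ((hcont1.fun_add hcont2).intervalIntegrable _ _)
      (hZcont.intervalIntegrable _ _),
    intervalIntegral.integral_add (hcont1.intervalIntegrable _ _)
      (hcont2.intervalIntegrable _ _),
    hzero, intervalIntegral.integral_const_mul]
  ring
end

section
/- Let α > 0 and let u be a smooth solution on (-1,1) of α[(1-x^2)^2 u']''' + 6 - (8/γ) e^{4u} = 0, where γ = ∫_{-1}^1 (1-x^2) e^{4u(x)} dx, such that G(x) = (1-x^2)u'(x) extends smoothly to [-1,1] with G(±1) = 0. If α ≠ 1, then ∫_{-1}^1 (1-x^2) G(x) dx = 0. -/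
open Set intervalIntegral MeasureTheory
open scoped ContDiff

set_option maxHeartbeats 1000000 in
/-- Lemma 3.1: for a smooth axially symmetric solution `u` of the constant `Q`-curvature
type equation with `α ≠ 1`, the zero-mode of `G = (1-x²)u'` vanishes:
`∫_{-1}^1 (1-x²) G dx = 0`. -/
theorem zero_mode_vanishes (α : ℝ) (hα : 0 < α) (hα1 : α ≠ 1)
    (u : ℝ → ℝ) (hu : ContDiff ℝ (⊤ : ℕ∞) u)
    (γ : ℝ) (hγ : γ = ∫ x in (-1 : ℝ)..1, (1 - x ^ 2) * Real.exp (4 * u x))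
    (hode : ∀ x ∈ Set.Ioo (-1 : ℝ) 1,
      α * iteratedDeriv 3 (fun y : ℝ => (1 - y ^ 2) ^ 2 * deriv u y) x
        + 6 - (8 / γ) * Real.exp (4 * u x) = 0) :
    ∫ x in (-1 : ℝ)..1, (1 - x ^ 2) * ((1 - x ^ 2) * deriv u x) = 0 := by
  have hone : (1 : WithTop ℕ∞) ≤ ∞ := by norm_num
  have hu' : ContDiff ℝ ∞ u := hu.of_le (by simp)
  have huD : Differentiable ℝ u := hu.differentiable (by simp)
  have hD1c : ContDiff ℝ ∞ (deriv u) := (contDiff_infty_iff_deriv.mp hu').2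
  have hD1d : Differentiable ℝ (deriv u) := hD1c.differentiable (by simp)
  set v : ℝ → ℝ := fun x => (1 - x ^ 2) ^ 2 * deriv u x with hvdef
  have hvc : ContDiff ℝ ∞ v := ((contDiff_const.sub (contDiff_id.pow 2)).pow 2).mul hD1c
  set v1 : ℝ → ℝ := deriv v with hv1def
  have hv1c : ContDiff ℝ ∞ v1 := (contDiff_infty_iff_deriv.mp hvc).2
  set v2 : ℝ → ℝ := deriv v1 with hv2def
  have hv2c : ContDiff ℝ ∞ v2 := (contDiff_infty_iff_deriv.mp hv1c).2
  set v3 : ℝ → ℝ := deriv v2 with hv3def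
  have hv3c : ContDiff ℝ ∞ v3 := (contDiff_infty_iff_deriv.mp hv2c).2
  set E : ℝ → ℝ := fun x => Real.exp (4 * u x) with hEdef
  have hEc : Continuous E := Real.continuous_exp.comp (continuous_const.mul hu.continuous)
  -- iterated derivative is the triple derivative
  have hiter : iteratedDeriv 3 v = v3 := by
    rw [hv3def, hv2def, hv1def]
    simp [iteratedDeriv_succ, iteratedDeriv_zero]
  rw [hiter] at hode
  -- derivative facts
  have hvd : ∀ x, HasDerivAt v (v1 x) x := by
    intro x; rw [hv1def]; exact (hvc.differentiable (by simp) x).hasDerivAt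
  have hv1d : ∀ x, HasDerivAt v1 (v2 x) x := by
    intro x; rw [hv2def]; exact (hv1c.differentiable (by simp) x).hasDerivAt
  have hv2d : ∀ x, HasDerivAt v2 (v3 x) x := by
    intro x; rw [hv3def]; exact (hv2c.differentiable (by simp) x).hasDerivAt
  have hEd : ∀ x, HasDerivAt E (E x * (4 * deriv u x)) x := by
    intro x
    exact ((huD x).hasDerivAt.const_mul 4).exp
  -- explicit formula for v1
  have hgd : ∀ x : ℝ, HasDerivAt (fun y : ℝ => (1 - y ^ 2) ^ 2)
      (2 * (1 - x ^ 2) * (-(2 * x))) x := by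
    intro x
    have h0 : HasDerivAt (fun y : ℝ => 1 - y ^ 2) (-(2 * x)) x := by
      simpa using (hasDerivAt_pow 2 x).const_sub 1
    exact (h0.pow 2).congr_deriv (by norm_num)
  have hv1x : ∀ x, v1 x = 2 * (1 - x ^ 2) * (-(2 * x)) * deriv u x
      + (1 - x ^ 2) ^ 2 * deriv (deriv u) x := by
    intro x
    have h2 := (hgd x).mul (hD1d x).hasDerivAt
    rw [hv1def, hvdef]
    exact HasDerivAt.deriv h2
  have hv_one : v 1 = 0 := by rw [hvdef]; norm_num
  have hv_mone : v (-1) = 0 := by rw [hvdef]; norm_num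
  have hv1_one : v1 1 = 0 := by rw [hv1x]; norm_num
  have hv1_mone : v1 (-1) = 0 := by rw [hv1x]; norm_num
  -- integrability facts
  have hcp : Continuous fun x : ℝ => x - x ^ 3 := by continuity
  have hint_pv3 : IntervalIntegrable (fun x => (x - x ^ 3) * v3 x) volume (-1) 1 :=
    (hcp.mul hv3c.continuous).intervalIntegrable _ _
  have hint_v : IntervalIntegrable v volume (-1) 1 := hvc.continuous.intervalIntegrable _ _
  have hint_vv3 : IntervalIntegrable (fun x => v x * v3 x) volume (-1) 1 :=
    (hvc.continuous.mul hv3c.continuous).intervalIntegrable _ _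
  have hint_pE : IntervalIntegrable (fun x => (x - x ^ 3) * E x) volume (-1) 1 :=
    (hcp.mul hEc).intervalIntegrable _ _
  have hint_vE : IntervalIntegrable (fun x => v x * E x) volume (-1) 1 :=
    (hvc.continuous.mul hEc).intervalIntegrable _ _
  -- Integration by parts identity 1 : ∫ p v3 = 6 ∫ v
  have key1 : (∫ x in (-1:ℝ)..1, ((x - x ^ 3) * v3 x - 6 * v x)) = 0 := by
    have H : ∀ x ∈ uIcc (-1:ℝ) 1, HasDerivAt
        (fun y => (y - y ^ 3) * v2 y - (1 - 3 * y ^ 2) * v1 y + (-(6 * y)) * v y)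
        ((x - x ^ 3) * v3 x - 6 * v x) x := by
      intro x _
      have hp : HasDerivAt (fun y : ℝ => y - y ^ 3) (1 - 3 * x ^ 2) x := by
        exact ((hasDerivAt_id x).sub (hasDerivAt_pow 3 x)).congr_deriv (by norm_num)
      have hp' : HasDerivAt (fun y : ℝ => 1 - 3 * y ^ 2) (-(6 * x)) x := by
        have := ((hasDerivAt_pow 2 x).const_mul (3:ℝ)).const_sub 1
        simpa using this.congr_deriv (by ring)
      have hp'' : HasDerivAt (fun y : ℝ => -(6 * y)) (-6 : ℝ) x := by
        exact ((hasDerivAt_id x).const_mul (6:ℝ)).neg.congr_deriv (by ring)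
      have := ((hp.mul (hv2d x)).sub (hp'.mul (hv1d x))).add (hp''.mul (hvd x))
      exact this.congr_deriv (by ring)
    have hint : IntervalIntegrable (fun x => (x - x ^ 3) * v3 x - 6 * v x) volume (-1) 1 :=
      hint_pv3.sub (hint_v.const_mul 6)
    rw [integral_eq_sub_of_hasDerivAt H hint]
    norm_num [hv_one, hv_mone, hv1_one, hv1_mone]
  have fact1 : (∫ x in (-1:ℝ)..1, (x - x ^ 3) * v3 x) = 6 * ∫ x in (-1:ℝ)..1, v x := by
    have := key1
    rw [integral_sub hint_pv3 (hint_v.const_mul 6), intervalIntegral.integral_const_mul] at this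
    linarith
  -- Integration by parts identity 2 : ∫ v v3 = 0
  have fact2 : (∫ x in (-1:ℝ)..1, v x * v3 x) = 0 := by
    have H : ∀ x ∈ uIcc (-1:ℝ) 1, HasDerivAt
        (fun y => v y * v2 y - v1 y ^ 2 / 2) (v x * v3 x) x := by
      intro x _
      have h1 := (hvd x).mul (hv2d x)
      have h2 := (((hv1d x).pow 2).div_const 2)
      have := h1.sub h2
      exact this.congr_deriv (by ring)
    rw [integral_eq_sub_of_hasDerivAt H hint_vv3]
    norm_num [hv_one, hv_mone, hv1_one, hv1_mone]
  -- Integration by parts identity 3 : ∫ p E = ∫ v E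
  have fact3 : (∫ x in (-1:ℝ)..1, (x - x ^ 3) * E x) = ∫ x in (-1:ℝ)..1, v x * E x := by
    have H : ∀ x ∈ uIcc (-1:ℝ) 1, HasDerivAt
        (fun y => -((1 - y ^ 2) ^ 2 / 4) * E y)
        ((x - x ^ 3) * E x - v x * E x) x := by
      intro x _
      have hq : HasDerivAt (fun y : ℝ => -((1 - y ^ 2) ^ 2 / 4)) (x - x ^ 3) x := by
        have := ((hgd x).div_const 4).neg
        exact this.congr_deriv (by ring)
      have := hq.mul (hEd x)
      refine this.congr_deriv ?_
      rw [hvdef]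
      ring
    have h := integral_eq_sub_of_hasDerivAt H (hint_pE.sub hint_vE)
    rw [integral_sub hint_pE hint_vE] at h
    norm_num at h
    linarith
  -- extend the ODE to the closed interval by continuity
  have hIccEq : ∀ x ∈ Icc (-1:ℝ) 1, α * v3 x = (8 / γ) * E x - 6 := by
    have hcont : Continuous (fun x => α * v3 x + 6 - (8 / γ) * E x) :=
      ((continuous_const.mul hv3c.continuous).add continuous_const).sub
        (continuous_const.mul hEc)
    have heq : Set.EqOn (fun x => α * v3 x + 6 - (8 / γ) * E x) (fun _ => 0)
        (Ioo (-1:ℝ) 1) := by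
      intro x hx
      exact hode x hx
    have hcl := heq.closure hcont continuous_const
    rw [closure_Ioo (by norm_num : (-1:ℝ) ≠ 1)] at hcl
    intro x hx
    have := hcl hx
    simp only at this
    linarith
  have huIcc : uIcc (-1:ℝ) 1 = Icc (-1:ℝ) 1 := uIcc_of_le (by norm_num)
  -- ∫ p = 0
  have hIp0 : (∫ x in (-1:ℝ)..1, (x - x ^ 3)) = 0 := by
    rw [integral_sub intervalIntegrable_id ((continuous_pow 3).intervalIntegrable _ _),
      integral_id, integral_pow]
    norm_num
  -- test the equation with p
  have comp1 : α * (∫ x in (-1:ℝ)..1, (x - x ^ 3) * v3 x)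
      = (8 / γ) * ∫ x in (-1:ℝ)..1, (x - x ^ 3) * E x := by
    rw [← intervalIntegral.integral_const_mul]
    have hcong : (∫ x in (-1:ℝ)..1, α * ((x - x ^ 3) * v3 x))
        = ∫ x in (-1:ℝ)..1, ((8 / γ) * ((x - x ^ 3) * E x) - 6 * (x - x ^ 3)) := by
      apply integral_congr
      intro x hx
      rw [huIcc] at hx
      have h := hIccEq x hx
      simp only
      linear_combination (x - x ^ 3) * h
    rw [hcong, integral_sub (hint_pE.const_mul _) ((hcp.intervalIntegrable _ _).const_mul 6),
      intervalIntegral.integral_const_mul, intervalIntegral.integral_const_mul, hIp0]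
    ring
  -- test the equation with v
  have comp2 : α * (∫ x in (-1:ℝ)..1, v x * v3 x)
      = (8 / γ) * (∫ x in (-1:ℝ)..1, v x * E x) - 6 * ∫ x in (-1:ℝ)..1, v x := by
    rw [← intervalIntegral.integral_const_mul]
    have hcong : (∫ x in (-1:ℝ)..1, α * (v x * v3 x))
        = ∫ x in (-1:ℝ)..1, ((8 / γ) * (v x * E x) - 6 * v x) := by
      apply integral_congr
      intro x hx
      rw [huIcc] at hx
      have h := hIccEq x hx
      simp only
      linear_combination (v x) * h
    rw [hcong, integral_sub (hint_vE.const_mul _) (hint_v.const_mul 6),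
      intervalIntegral.integral_const_mul, intervalIntegral.integral_const_mul]
  -- conclude
  set A : ℝ := ∫ x in (-1:ℝ)..1, v x with hAdef
  have h6 : α * (6 * A) = 6 * A := by
    rw [fact1] at comp1
    rw [fact2] at comp2
    rw [fact3] at comp1
    linarith
  have hA0 : A = 0 := by
    have hz : (α - 1) * (6 * A) = 0 := by linear_combination h6
    rcases mul_eq_zero.mp hz with h | h
    · exact absurd (by linarith : α = 1) hα1
    · linarith
  have : (∫ x in (-1:ℝ)..1, (1 - x ^ 2) * ((1 - x ^ 2) * deriv u x)) = A := by
    rw [hAdef]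
    apply integral_congr
    intro x _
    rw [hvdef]
    ring
  rw [this, hA0]
end

section
/- Let α > 0 and let u be a smooth solution on (-1,1) of α[(1-x^2)^2 u']''' + 6 - (8/γ)e^{4u} = 0 with γ = ∫_{-1}^1 (1-x^2)e^{4u} dx, such that G(x) = (1-x^2)u'(x) extends smoothly to [-1,1] with G(±1) = 0. Write β = (15/4)∫_{-1}^1 x(1-x^2)G(x) dx for the first Gegenbauer coefficient of G. Then (1/γ)∫_{-1}^1 (1-x^2)^2 e^{4u(x)} dx = (4/5)(1 - αβ). -/
open intervalIntegral MeasureTheory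

set_option maxHeartbeats 2000000 in
/-- Identity (2.21): `(1/γ)∫_{-1}^1 (1-x²)² e^{4u} dx = (4/5)(1 - αβ)` where
`β` is the first Gegenbauer coefficient of `G = (1-x²)u'`. -/
theorem second_moment_identity (α : ℝ) (hα : 0 < α)
    (u : ℝ → ℝ) (hu : ContDiff ℝ (⊤ : ℕ∞) u)
    (γ : ℝ) (hγ : γ = ∫ x in (-1 : ℝ)..1, (1 - x ^ 2) * Real.exp (4 * u x))
    (hode : ∀ x ∈ Set.Ioo (-1 : ℝ) 1,
      α * iteratedDeriv 3 (fun y : ℝ => (1 - y ^ 2) ^ 2 * deriv u y) x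
        + 6 - (8 / γ) * Real.exp (4 * u x) = 0)
    (β : ℝ)
    (hβ : β = (15 / 4) * ∫ x in (-1 : ℝ)..1, x * ((1 - x ^ 2) * ((1 - x ^ 2) * deriv u x))) :
    (1 / γ) * ∫ x in (-1 : ℝ)..1, (1 - x ^ 2) ^ 2 * Real.exp (4 * u x)
      = (4 / 5) * (1 - α * β) := by
  set w : ℝ → ℝ := fun y : ℝ => (1 - y ^ 2) ^ 2 * deriv u y with hw_def
  have hu2 : ContDiff ℝ (⊤ : ℕ∞) u := hu.of_le (by simp)
  have hu' : ContDiff ℝ (⊤ : ℕ∞) (deriv u) := (contDiff_infty_iff_deriv.mp hu2).2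
  have hw : ContDiff ℝ (⊤ : ℕ∞) w := by
    apply ContDiff.mul _ hu'
    exact (contDiff_const.sub (contDiff_id.pow 2)).pow 2
  have hwn : ∀ n : ℕ, ContDiff ℝ (⊤ : ℕ∞) (iteratedDeriv n w) := by
    intro n
    rw [iteratedDeriv_eq_iterate]
    exact hw.iterate_deriv n
  have hder : ∀ n : ℕ, ∀ x : ℝ, HasDerivAt (iteratedDeriv n w) (iteratedDeriv (n + 1) w x) x := by
    intro n x
    rw [iteratedDeriv_succ]
    exact (((hwn n).differentiable (by simp)) x).hasDerivAt
  have hcont : ∀ n : ℕ, Continuous (iteratedDeriv n w) := fun n => (hwn n).continuous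
  -- polynomial test functions
  have hφ0 : ∀ x : ℝ, HasDerivAt (fun x : ℝ => (1 - x ^ 2) ^ 2) (-4 * x + 4 * x ^ 3) x := by
    intro x
    have h1 : HasDerivAt (fun x : ℝ => 1 - x ^ 2) (-(2 * x)) x := by
      simpa using (hasDerivAt_pow 2 x).const_sub 1
    have := h1.pow 2
    exact this.congr_deriv (by ring)
  have hφ1 : ∀ x : ℝ, HasDerivAt (fun x : ℝ => -4 * x + 4 * x ^ 3) (-4 + 12 * x ^ 2) x := by
    intro x
    have := ((hasDerivAt_id x).const_mul (-4 : ℝ)).add ((hasDerivAt_pow 3 x).const_mul 4)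
    exact this.congr_deriv (by ring)
  have hφ2 : ∀ x : ℝ, HasDerivAt (fun x : ℝ => -4 + 12 * x ^ 2) (24 * x) x := by
    intro x
    have := ((hasDerivAt_pow 2 x).const_mul (12 : ℝ)).const_add (-4 : ℝ)
    exact this.congr_deriv (by ring)
  -- integration by parts, three times
  have ibpA : ∫ x in (-1 : ℝ)..1, (1 - x ^ 2) ^ 2 * iteratedDeriv 3 w x
      = -∫ x in (-1 : ℝ)..1, (-4 * x + 4 * x ^ 3) * iteratedDeriv 2 w x := by
    have := integral_mul_deriv_eq_deriv_mul (a := (-1 : ℝ)) (b := 1)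
      (u := fun x : ℝ => (1 - x ^ 2) ^ 2) (u' := fun x : ℝ => -4 * x + 4 * x ^ 3)
      (v := iteratedDeriv 2 w) (v' := iteratedDeriv 3 w)
      (fun x _ => hφ0 x) (fun x _ => hder 2 x)
      ((by continuity : Continuous fun x : ℝ => -4 * x + 4 * x ^ 3).intervalIntegrable _ _)
      ((hcont 3).intervalIntegrable _ _)
    rw [this]; norm_num
  have ibpB : ∫ x in (-1 : ℝ)..1, (-4 * x + 4 * x ^ 3) * iteratedDeriv 2 w x
      = -∫ x in (-1 : ℝ)..1, (-4 + 12 * x ^ 2) * iteratedDeriv 1 w x := by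
    have := integral_mul_deriv_eq_deriv_mul (a := (-1 : ℝ)) (b := 1)
      (u := fun x : ℝ => -4 * x + 4 * x ^ 3) (u' := fun x : ℝ => -4 + 12 * x ^ 2)
      (v := iteratedDeriv 1 w) (v' := iteratedDeriv 2 w)
      (fun x _ => hφ1 x) (fun x _ => hder 1 x)
      ((by continuity : Continuous fun x : ℝ => -4 + 12 * x ^ 2).intervalIntegrable _ _)
      ((hcont 2).intervalIntegrable _ _)
    rw [this]; norm_num
  have hw1 : w 1 = 0 := by simp [hw_def]
  have hwm1 : w (-1) = 0 := by norm_num [hw_def]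
  have ibpC : ∫ x in (-1 : ℝ)..1, (-4 + 12 * x ^ 2) * iteratedDeriv 1 w x
      = -∫ x in (-1 : ℝ)..1, (24 * x) * w x := by
    have := integral_mul_deriv_eq_deriv_mul (a := (-1 : ℝ)) (b := 1)
      (u := fun x : ℝ => -4 + 12 * x ^ 2) (u' := fun x : ℝ => 24 * x)
      (v := w) (v' := iteratedDeriv 1 w)
      (fun x _ => hφ2 x) (fun x _ => by simpa [iteratedDeriv_one] using
        (((hw.differentiable (by simp)) x).hasDerivAt))
      ((by continuity : Continuous fun x : ℝ => 24 * x).intervalIntegrable _ _)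
      ((hcont 1).intervalIntegrable _ _)
    rw [this, hw1, hwm1]; ring
  -- value of ∫ x * w x
  have hJ : ∫ x in (-1 : ℝ)..1, x * w x = (4 / 15) * β := by
    have : (∫ x in (-1 : ℝ)..1, x * w x)
        = ∫ x in (-1 : ℝ)..1, x * ((1 - x ^ 2) * ((1 - x ^ 2) * deriv u x)) := by
      apply intervalIntegral.integral_congr
      intro x _
      simp only [hw_def]; ring
    rw [this]; rw [hβ]; ring
  have key3 : ∫ x in (-1 : ℝ)..1, (1 - x ^ 2) ^ 2 * iteratedDeriv 3 w x
      = -(32 / 5) * β := by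
    rw [ibpA, ibpB, ibpC]
    have : (∫ x in (-1 : ℝ)..1, (24 * x) * w x) = 24 * ∫ x in (-1 : ℝ)..1, x * w x := by
      rw [← intervalIntegral.integral_const_mul]
      apply intervalIntegral.integral_congr
      intro x _; ring
    rw [this, hJ]; ring
  -- ODE identity on the closed interval by continuity
  have hEq : Set.EqOn (fun x : ℝ => α * iteratedDeriv 3 w x)
      (fun x : ℝ => (8 / γ) * Real.exp (4 * u x) - 6) (Set.Icc (-1 : ℝ) 1) := by
    have hcl : closure (Set.Ioo (-1 : ℝ) 1) = Set.Icc (-1 : ℝ) 1 := by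
      rw [closure_Ioo]; norm_num
    rw [← hcl]
    apply Set.EqOn.closure
    · intro x hx
      have := hode x hx
      simp only [hw_def] at this ⊢
      linarith
    · exact continuous_const.mul (hcont 3)
    · exact (continuous_const.mul (Real.continuous_exp.comp
        (continuous_const.mul hu.continuous))).sub continuous_const
  have hInt16 : ∫ x in (-1 : ℝ)..1, (1 - x ^ 2) ^ 2 = 16 / 15 := by
    have : ∀ x ∈ Set.uIcc (-1 : ℝ) 1,
        HasDerivAt (fun x : ℝ => x - (2 / 3) * x ^ 3 + (1 / 5) * x ^ 5) ((1 - x ^ 2) ^ 2) x := by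
      intro x _
      have := ((hasDerivAt_id x).sub ((hasDerivAt_pow 3 x).const_mul (2 / 3 : ℝ))).add
        ((hasDerivAt_pow 5 x).const_mul (1 / 5 : ℝ))
      exact this.congr_deriv (by ring)
    rw [intervalIntegral.integral_eq_sub_of_hasDerivAt this
      (((continuous_const.sub (continuous_pow 2)).pow 2).intervalIntegrable _ _)]
    norm_num
  -- combine
  have hcontE : Continuous fun x : ℝ => Real.exp (4 * u x) :=
    Real.continuous_exp.comp (continuous_const.mul hu.continuous)
  set A : ℝ := ∫ x in (-1 : ℝ)..1, (1 - x ^ 2) ^ 2 * Real.exp (4 * u x) with hA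
  have main : α * (-(32 / 5) * β) = (8 / γ) * A - 32 / 5 := by
    have e1 : ∫ x in (-1 : ℝ)..1, (1 - x ^ 2) ^ 2 * (α * iteratedDeriv 3 w x)
        = α * ∫ x in (-1 : ℝ)..1, (1 - x ^ 2) ^ 2 * iteratedDeriv 3 w x := by
      rw [← intervalIntegral.integral_const_mul]
      apply intervalIntegral.integral_congr
      intro x _; ring
    have e2 : ∫ x in (-1 : ℝ)..1, (1 - x ^ 2) ^ 2 * (α * iteratedDeriv 3 w x)
        = ∫ x in (-1 : ℝ)..1, (1 - x ^ 2) ^ 2 * ((8 / γ) * Real.exp (4 * u x) - 6) := by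
      apply intervalIntegral.integral_congr
      intro x hx
      rw [Set.uIcc_of_le (by norm_num : (-1 : ℝ) ≤ 1)] at hx
      have h : α * iteratedDeriv 3 w x = 8 / γ * Real.exp (4 * u x) - 6 := hEq hx
      simp only [h]
    have e3 : ∫ x in (-1 : ℝ)..1, (1 - x ^ 2) ^ 2 * ((8 / γ) * Real.exp (4 * u x) - 6)
        = (8 / γ) * A - 6 * (16 / 15) := by
      have hsplit : (∫ x in (-1 : ℝ)..1, (1 - x ^ 2) ^ 2 * ((8 / γ) * Real.exp (4 * u x) - 6))
          = ∫ x in (-1 : ℝ)..1,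
            ((8 / γ) * ((1 - x ^ 2) ^ 2 * Real.exp (4 * u x)) - 6 * (1 - x ^ 2) ^ 2) := by
        apply intervalIntegral.integral_congr
        intro x _; ring
      rw [hsplit, intervalIntegral.integral_sub, intervalIntegral.integral_const_mul,
        intervalIntegral.integral_const_mul, hInt16]
      · exact (continuous_const.mul
          (((continuous_const.sub (continuous_pow 2)).pow 2).mul hcontE)).intervalIntegrable _ _
      · exact (continuous_const.mul
          ((continuous_const.sub (continuous_pow 2)).pow 2)).intervalIntegrable _ _
    have := e2
    rw [e3] at this
    rw [e1, key3] at this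
    linarith
  have h8 : (8 / γ) * A = 8 * ((1 / γ) * A) := by
    rw [div_eq_mul_inv, one_div]; ring
  rw [h8] at main
  linarith
end

section
/- Let α > 0 and u a smooth solution on (-1,1) of α[(1-x^2)^2 u']''' + 6 - (8/γ)e^{4u} = 0 with γ = ∫_{-1}^1 (1-x^2)e^{4u} dx, such that G = (1-x^2)u' extends smoothly to [-1,1] with G(±1)=0, and let β = (15/4)∫_{-1}^1 x(1-x^2)G dx. Then ∫_{-1}^1 |[(1-x^2)G(x)]'|^2 dx = (16/15)(5 - 1/α) β. -/
/-- Identity (2.23): `∫_{-1}^1 |[(1-x²)G]'|² dx = (16/15)(5 - 1/α) β` for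
`G = (1-x²)u'` with `u` an axially symmetric solution. -/
theorem first_deriv_energy_identity (α : ℝ) (hα : 0 < α)
    (u : ℝ → ℝ) (hu : ContDiff ℝ (⊤ : ℕ∞) u)
    (γ : ℝ) (hγ : γ = ∫ x in (-1 : ℝ)..1, (1 - x ^ 2) * Real.exp (4 * u x))
    (hode : ∀ x ∈ Set.Ioo (-1 : ℝ) 1,
      α * iteratedDeriv 3 (fun y : ℝ => (1 - y ^ 2) ^ 2 * deriv u y) x
        + 6 - (8 / γ) * Real.exp (4 * u x) = 0)
    (β : ℝ)
    (hβ : β = (15 / 4) * ∫ x in (-1 : ℝ)..1, x * ((1 - x ^ 2) * ((1 - x ^ 2) * deriv u x))) :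
    ∫ x in (-1 : ℝ)..1,
        (deriv (fun y : ℝ => (1 - y ^ 2) * ((1 - y ^ 2) * deriv u y)) x) ^ 2
      = (16 / 15) * (5 - 1 / α) * β := by
  have huT : ContDiff ℝ (⊤:ℕ∞) u := hu.of_le (by simp)
  have hu1 : ContDiff ℝ (⊤:ℕ∞) (deriv u) := (contDiff_infty_iff_deriv.mp huT).2
  set w : ℝ → ℝ := fun y : ℝ => (1 - y ^ 2) * ((1 - y ^ 2) * deriv u y) with hwdef
  have hwC : ContDiff ℝ (⊤:ℕ∞) w := by
    apply ContDiff.mul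
    · exact (contDiff_const.sub (contDiff_id.pow 2))
    · exact (contDiff_const.sub (contDiff_id.pow 2)).mul hu1
  set w1 : ℝ → ℝ := deriv w with hw1def
  have hw1C : ContDiff ℝ (⊤:ℕ∞) w1 := (contDiff_infty_iff_deriv.mp hwC).2
  set w2 : ℝ → ℝ := deriv w1 with hw2def
  have hw2C : ContDiff ℝ (⊤:ℕ∞) w2 := (contDiff_infty_iff_deriv.mp hw1C).2
  set w3 : ℝ → ℝ := deriv w2 with hw3def
  have hw3C : ContDiff ℝ (⊤:ℕ∞) w3 := (contDiff_infty_iff_deriv.mp hw2C).2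
  set w4 : ℝ → ℝ := deriv w3 with hw4def
  have hw4C : ContDiff ℝ (⊤:ℕ∞) w4 := (contDiff_infty_iff_deriv.mp hw3C).2
  -- has-deriv-at facts
  have hdw : ∀ x : ℝ, HasDerivAt w (w1 x) x := fun x =>
    ((hwC.differentiable (by simp)) x).hasDerivAt
  have hdw1 : ∀ x : ℝ, HasDerivAt w1 (w2 x) x := fun x =>
    ((hw1C.differentiable (by simp)) x).hasDerivAt
  have hdw2 : ∀ x : ℝ, HasDerivAt w2 (w3 x) x := fun x =>
    ((hw2C.differentiable (by simp)) x).hasDerivAt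
  have hdw3 : ∀ x : ℝ, HasDerivAt w3 (w4 x) x := fun x =>
    ((hw3C.differentiable (by simp)) x).hasDerivAt
  -- identify iteratedDeriv 3 with w3
  have hfun : (fun y : ℝ => (1 - y ^ 2) ^ 2 * deriv u y) = w := by
    funext y; simp only [hwdef]; ring
  have hit3 : iteratedDeriv 3 (fun y : ℝ => (1 - y ^ 2) ^ 2 * deriv u y) = w3 := by
    rw [hfun, show (3:ℕ) = 2+1 from rfl, iteratedDeriv_succ,
      show (2:ℕ) = 1+1 from rfl, iteratedDeriv_succ, iteratedDeriv_one]
  -- the ODE for w3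
  have h3eq : ∀ y ∈ Set.Ioo (-1:ℝ) 1, α * w3 y = 8 / γ * Real.exp (4 * u y) - 6 := by
    intro y hy
    have := hode y hy
    rw [hit3] at this
    linarith
  -- differentiate the ODE
  have hKey : ∀ x ∈ Set.Ioo (-1:ℝ) 1,
      α * ((1 - x ^ 2) * ((1 - x ^ 2) * w4 x)) = 4 * w x * (α * w3 x + 6) := by
    intro x hx
    have hmem : Set.Ioo (-1:ℝ) 1 ∈ nhds x := isOpen_Ioo.mem_nhds hx
    have heq : (fun y => α * w3 y) =ᶠ[nhds x]
        (fun y => 8 / γ * Real.exp (4 * u y) - 6) :=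
      Filter.eventually_of_mem hmem h3eq
    have hL : deriv (fun y => α * w3 y) x = α * w4 x := by
      rw [deriv_const_mul _ ((hw3C.differentiable (by simp)) x)]
    have hR : HasDerivAt (fun y => 8 / γ * Real.exp (4 * u y) - 6)
        (8 / γ * (Real.exp (4 * u x) * (4 * deriv u x))) x := by
      exact ((((hu.differentiable (by simp) x).hasDerivAt.const_mul
        (4:ℝ)).exp).const_mul (8/γ)).sub_const 6
    have hder : α * w4 x = 8 / γ * (Real.exp (4 * u x) * (4 * deriv u x)) := by
      rw [← hL, heq.deriv_eq, hR.deriv]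
    have h3 := h3eq x hx
    have hwx : w x = (1 - x ^ 2) * ((1 - x ^ 2) * deriv u x) := rfl
    rw [hwx]
    linear_combination ((1 - x ^ 2) * (1 - x ^ 2)) * hder
      - (4 * ((1 - x ^ 2) * ((1 - x ^ 2) * deriv u x))) * h3
  -- boundary values
  have hw_1 : w 1 = 0 := by simp [hwdef]
  have hw_m1 : w (-1) = 0 := by simp [hwdef]
  have hdw_bd : ∀ x : ℝ, x = 1 ∨ x = -1 → w1 x = 0 := by
    intro x hx
    have hq : HasDerivAt (fun y : ℝ => 1 - y ^ 2) (-(2 * x)) x := by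
      simpa using ((hasDerivAt_pow 2 x).const_sub 1)
    have hu' : HasDerivAt (deriv u) (deriv (deriv u) x) x :=
      ((hu1.differentiable (by simp)) x).hasDerivAt
    have H : HasDerivAt w
        (-(2*x) * ((1 - x^2) * deriv u x) +
          (1 - x^2) * (-(2*x) * deriv u x + (1 - x^2) * deriv (deriv u) x)) x :=
      hq.mul (hq.mul hu')
    have : w1 x = _ := H.deriv
    rw [this]
    rcases hx with h | h <;> rw [h] <;> ring_nf
  -- the antiderivative
  set F : ℝ → ℝ := fun y =>
    α * (y * (1 - y^2) * (1 - y^2) * w3 y - (1 - y^2) * (1 - 5*y^2) * w2 y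
        + (20*y^3 - 12*y) * w1 y - (60*y^2 - 12) * w y)
    - 4*α * (y * w y * w2 y - w y * w1 y - y/2 * (w1 y)^2) with hFdef
  set Fd : ℝ → ℝ := fun y =>
    α * (y * (1 - y^2) * (1 - y^2) * w4 y - 120 * y * w y)
    - 4*α * (y * w y * w3 y) + 6*α * (w1 y)^2 with hFddef
  have hF : ∀ x : ℝ, HasDerivAt F (Fd x) x := by
    intro x
    have hx : HasDerivAt (fun y : ℝ => y) 1 x := hasDerivAt_id x
    have hq : HasDerivAt (fun y : ℝ => 1 - y ^ 2) (-(2 * x^1)) x :=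
      (hasDerivAt_pow 2 x).const_sub 1
    have h5 : HasDerivAt (fun y : ℝ => 1 - 5 * y ^ 2) (-(5 * (2 * x^1))) x :=
      ((hasDerivAt_pow 2 x).const_mul 5).const_sub 1
    have h20 : HasDerivAt (fun y : ℝ => 20 * y ^ 3 - 12 * y)
        (20 * (3 * x^2) - 12 * 1) x :=
      ((hasDerivAt_pow 3 x).const_mul 20).sub ((hasDerivAt_id x).const_mul 12)
    have h60 : HasDerivAt (fun y : ℝ => 60 * y ^ 2 - 12) (60 * (2 * x^1)) x :=
      ((hasDerivAt_pow 2 x).const_mul 60).sub_const 12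
    have tA := ((hx.mul hq).mul hq).mul (hdw3 x)
    have tB := (hq.mul h5).mul (hdw2 x)
    have tC := h20.mul (hdw1 x)
    have tD := h60.mul (hdw x)
    have tE := ((hx.mul (hdw x)).mul (hdw2 x))
    have tF2 := (hdw x).mul (hdw1 x)
    have tG := (hx.div_const 2).mul ((hdw1 x).pow 2)
    have H := ((((tA.sub tB).add tC).sub tD).const_mul α).sub
      ((((tE.sub tF2).sub tG)).const_mul (4*α))
    convert H using 1
    · rfl
    · rfl
    · rfl
    simp only [hFddef, Pi.mul_apply, Pi.pow_apply]
    ring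
  -- FTC
  have hcw : Continuous w := hwC.continuous
  have hcw1 : Continuous w1 := hw1C.continuous
  have hcw3 : Continuous w3 := hw3C.continuous
  have hcw4 : Continuous w4 := hw4C.continuous
  have hcont : Continuous Fd := by
    simp only [hFddef]
    fun_prop
  have hFTC : ∫ x in (-1:ℝ)..1, Fd x = F 1 - F (-1) :=
    intervalIntegral.integral_eq_sub_of_hasDerivAt (fun x _ => hF x)
      (hcont.intervalIntegrable _ _)
  have hF1 : F 1 = 0 := by
    simp only [hFdef, hw_1, hdw_bd 1 (Or.inl rfl)]; norm_num
  have hFm1 : F (-1) = 0 := by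
    simp only [hFdef, hw_m1, hdw_bd (-1) (Or.inr rfl)]; norm_num
  -- rewrite Fd on the interval
  set g : ℝ → ℝ := fun y => 6*α*(w1 y)^2 + (24 - 120*α) * (y * w y) with hgdef
  have hcongr : ∫ x in (-1:ℝ)..1, Fd x = ∫ x in (-1:ℝ)..1, g x := by
    apply intervalIntegral.integral_congr_ae
    have hone : ∀ᵐ x : ℝ, x ≠ 1 := by
      rw [MeasureTheory.ae_iff]
      simp [Set.setOf_eq_eq_singleton]
    filter_upwards [hone] with x hx hxi
    rw [Set.uIoc_of_le (by norm_num : (-1:ℝ) ≤ 1)] at hxi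
    have hxIoo : x ∈ Set.Ioo (-1:ℝ) 1 := ⟨hxi.1, lt_of_le_of_ne hxi.2 hx⟩
    have hk := hKey x hxIoo
    simp only [hFddef, hgdef]
    linear_combination x * hk
  -- split the integral of g
  have hI1 : IntervalIntegrable (fun x : ℝ => 6*α*(w1 x)^2) MeasureTheory.volume (-1) 1 :=
    (by fun_prop : Continuous fun x : ℝ => 6*α*(w1 x)^2).intervalIntegrable _ _
  have hI2 : IntervalIntegrable (fun x : ℝ => (24 - 120*α) * (x * w x)) MeasureTheory.volume (-1) 1 :=
    (by fun_prop : Continuous fun x : ℝ => (24 - 120*α) * (x * w x)).intervalIntegrable _ _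
  have hsplit : ∫ x in (-1:ℝ)..1, g x
      = 6*α * (∫ x in (-1:ℝ)..1, (w1 x)^2) + (24 - 120*α) * ∫ x in (-1:ℝ)..1, x * w x := by
    simp only [hgdef]
    rw [intervalIntegral.integral_add hI1 hI2, intervalIntegral.integral_const_mul,
      intervalIntegral.integral_const_mul]
  set I : ℝ := ∫ x in (-1:ℝ)..1, (w1 x)^2 with hIdef
  set J : ℝ := ∫ x in (-1:ℝ)..1, x * w x with hJdef
  have hzero : 6*α*I + (24 - 120*α)*J = 0 := by
    rw [← hsplit, ← hcongr, hFTC, hF1, hFm1]; ring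
  rw [hβ]
  have hαne : α ≠ 0 := ne_of_gt hα
  field_simp
  linarith [hzero]
end

section
/- Let α > 0 and u a smooth solution on (-1,1) of α[(1-x^2)^2 u']''' + 6 - (8/γ)e^{4u} = 0, γ = ∫_{-1}^1 (1-x^2)e^{4u}dx, with G = (1-x^2)u' extending smoothly to [-1,1] with G(±1) = 0. Then G'(x) ≤ 1/α for all x ∈ [-1,1]. -/
open Set

private lemma hda_congr {f : ℝ → ℝ} {a b x : ℝ} (h : HasDerivAt f a x) (e : a = b) :
    HasDerivAt f b x := e ▸ h

/-- Abstract maximum-principle step: if `g` has derivative `dg`, and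
`ψ x = (1-x²)³ dg x` has positive derivative wherever `g ≥ 1/α` in `(-1,1)`,
then `g ≤ 1/α` on `[-1,1]`. -/
private lemma max_principle (α : ℝ) (hα : 0 < α) (g dg ψ dψ : ℝ → ℝ)
    (hg : ∀ x, HasDerivAt g (dg x) x)
    (hψ : ∀ x, HasDerivAt ψ (dψ x) x)
    (hψeq : ∀ x, ψ x = (1 - x ^ 2) ^ 3 * dg x)
    (hpos : ∀ x ∈ Set.Ioo (-1 : ℝ) 1, 1 / α ≤ g x → 0 < dψ x) :
    ∀ x ∈ Set.Icc (-1 : ℝ) 1, g x ≤ 1 / α := by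
  have hgd : Differentiable ℝ g := fun x => (hg x).differentiableAt
  have hψd : Differentiable ℝ ψ := fun x => (hψ x).differentiableAt
  have hgc : Continuous g := hgd.continuous
  have hψc : Continuous ψ := hψd.continuous
  obtain ⟨x0, hx0m, hx0max⟩ := isCompact_Icc.exists_isMaxOn
    (Set.nonempty_Icc.mpr (by norm_num : (-1 : ℝ) ≤ 1)) hgc.continuousOn
  suffices hle : g x0 ≤ 1 / α by
    intro x hx; exact le_trans (hx0max hx) hle
  by_contra hM
  push_neg at hM
  have hopen : IsOpen {y : ℝ | 1 / α < g y} := isOpen_lt continuous_const hgc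
  obtain ⟨δ, hδ, hball⟩ := Metric.isOpen_iff.mp hopen x0 hM
  rcases eq_or_lt_of_le hx0m.1 with h1 | h1
  · -- x0 = -1
    set ε := min δ 1 with hεdef
    have hε0 : 0 < ε := lt_min hδ one_pos
    have hεδ : ε ≤ δ := min_le_left _ _
    have hε1 : ε ≤ 1 := min_le_right _ _
    have hsub : ∀ y ∈ Ioo x0 (x0 + ε), y ∈ Ioo (-1 : ℝ) 1 ∧ 1 / α ≤ g y := by
      intro y hy
      have hy1 : -1 < y := h1 ▸ hy.1
      have hy2 : y < 1 := by
        have h2 := hy.2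
        rw [← h1] at h2
        linarith
      refine ⟨⟨hy1, hy2⟩, le_of_lt (hball ?_)⟩
      rw [Metric.mem_ball, Real.dist_eq, abs_lt]
      constructor
      · linarith [hy.1]
      · linarith [hy.2]
    have hψ0 : ψ x0 = 0 := by rw [hψeq, ← h1]; norm_num
    have hmono : StrictMonoOn ψ (Icc x0 (x0 + ε)) := by
      apply strictMonoOn_of_deriv_pos (convex_Icc _ _) hψc.continuousOn
      intro y hy
      rw [interior_Icc] at hy
      obtain ⟨hy1, hy2⟩ := hsub y hy
      rw [(hψ y).deriv]
      exact hpos y hy1 hy2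
    have hdgpos : ∀ y ∈ Ioo x0 (x0 + ε), 0 < dg y := by
      intro y hy
      have h0 : ψ x0 < ψ y :=
        hmono ⟨le_refl x0, by linarith⟩ ⟨le_of_lt hy.1, le_of_lt hy.2⟩ hy.1
      rw [hψ0, hψeq] at h0
      have hyI := (hsub y hy).1
      have hy2 : 0 < 1 - y ^ 2 := by nlinarith [hyI.1, hyI.2]
      have h2 : 0 < (1 - y ^ 2) ^ 3 := pow_pos hy2 3
      by_contra hc
      push_neg at hc
      nlinarith [mul_nonneg h2.le (neg_nonneg.mpr hc)]
    have hgmono : StrictMonoOn g (Icc x0 (x0 + ε)) := by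
      apply strictMonoOn_of_deriv_pos (convex_Icc _ _) hgc.continuousOn
      intro y hy
      rw [interior_Icc] at hy
      rw [(hg y).deriv]
      exact hdgpos y hy
    have hkey : g x0 < g (x0 + ε / 2) :=
      hgmono ⟨le_refl _, by linarith⟩ ⟨by linarith, by linarith⟩ (by linarith)
    have hmem : x0 + ε / 2 ∈ Icc (-1 : ℝ) 1 := by
      constructor
      · linarith [hx0m.1]
      · rw [← h1]; linarith
    exact absurd (hx0max hmem) (not_le.mpr hkey)
  · -- -1 < x0
    set ε := min δ (x0 + 1) with hεdef
    have hε0 : 0 < ε := lt_min hδ (by linarith)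
    have hεδ : ε ≤ δ := min_le_left _ _
    have hεx : ε ≤ x0 + 1 := min_le_right _ _
    have hsub : ∀ y ∈ Ioo (x0 - ε) x0, y ∈ Ioo (-1 : ℝ) 1 ∧ 1 / α ≤ g y := by
      intro y hy
      refine ⟨⟨by linarith [hy.1], by linarith [hy.2, hx0m.2]⟩, le_of_lt (hball ?_)⟩
      rw [Metric.mem_ball, Real.dist_eq, abs_lt]
      constructor
      · linarith [hy.1]
      · linarith [hy.2]
    have hψ0 : ψ x0 = 0 := by
      rcases eq_or_lt_of_le hx0m.2 with h2 | h2
      · rw [hψeq, h2]; norm_num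
      · have hnhds : Icc (-1 : ℝ) 1 ∈ nhds x0 := Icc_mem_nhds h1 h2
        have hloc : IsLocalMax g x0 := hx0max.isLocalMax hnhds
        have hd0 : deriv g x0 = 0 := hloc.deriv_eq_zero
        rw [(hg x0).deriv] at hd0
        rw [hψeq, hd0, mul_zero]
    have hmono : StrictMonoOn ψ (Icc (x0 - ε) x0) := by
      apply strictMonoOn_of_deriv_pos (convex_Icc _ _) hψc.continuousOn
      intro y hy
      rw [interior_Icc] at hy
      obtain ⟨hy1, hy2⟩ := hsub y hy
      rw [(hψ y).deriv]
      exact hpos y hy1 hy2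
    have hdgneg : ∀ y ∈ Ioo (x0 - ε) x0, dg y < 0 := by
      intro y hy
      have h0 : ψ y < ψ x0 :=
        hmono ⟨le_of_lt hy.1, le_of_lt hy.2⟩ ⟨by linarith, le_refl x0⟩ hy.2
      rw [hψ0, hψeq] at h0
      have hyI := (hsub y hy).1
      have hy2 : 0 < 1 - y ^ 2 := by nlinarith [hyI.1, hyI.2]
      have h2 : 0 < (1 - y ^ 2) ^ 3 := pow_pos hy2 3
      by_contra hc
      push_neg at hc
      nlinarith [mul_nonneg h2.le hc]
    have hganti : StrictAntiOn g (Icc (x0 - ε) x0) := by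
      apply strictAntiOn_of_deriv_neg (convex_Icc _ _) hgc.continuousOn
      intro y hy
      rw [interior_Icc] at hy
      rw [(hg y).deriv]
      exact hdgneg y hy
    have hkey : g x0 < g (x0 - ε / 2) :=
      hganti ⟨by linarith, by linarith⟩ ⟨by linarith, le_refl x0⟩ (by linarith)
    have hmem : x0 - ε / 2 ∈ Icc (-1 : ℝ) 1 := by
      constructor
      · linarith
      · linarith [hx0m.2]
    exact absurd (hx0max hmem) (not_le.mpr hkey)

private lemma key_lemma (α γ : ℝ) (hα : 0 < α) (hγ : 0 < γ)
    (u u1 u2 u3 u4 : ℝ → ℝ)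
    (h2 : ∀ x, HasDerivAt u1 (u2 x) x)
    (h3 : ∀ x, HasDerivAt u2 (u3 x) x)
    (h4 : ∀ x, HasDerivAt u3 (u4 x) x)
    (hode : ∀ x ∈ Set.Ioo (-1 : ℝ) 1,
      α * iteratedDeriv 3 (fun y : ℝ => (1 - y ^ 2) ^ 2 * u1 y) x
        + 6 - (8 / γ) * Real.exp (4 * u x) = 0) :
    ∀ x ∈ Set.Icc (-1 : ℝ) 1,
      deriv (fun y : ℝ => (1 - y ^ 2) * u1 y) x ≤ 1 / α := by
  -- basic polynomial derivatives
  have hQ : ∀ x : ℝ, HasDerivAt (fun y : ℝ => 1 - y ^ 2) (-(2 * x)) x := fun x =>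
    hda_congr ((hasDerivAt_pow 2 x).const_sub 1) (by norm_num)
  have hQ2 : ∀ x : ℝ, HasDerivAt (fun y : ℝ => (1 - y ^ 2) ^ 2) (4 * x ^ 3 - 4 * x) x := fun x =>
    hda_congr ((hQ x).pow 2) (by norm_num; ring)
  have hP1 : ∀ x : ℝ, HasDerivAt (fun y : ℝ => 4 * y ^ 3 - 4 * y) (12 * x ^ 2 - 4) x := fun x =>
    hda_congr (((hasDerivAt_pow 3 x).const_mul 4).sub ((hasDerivAt_id x).const_mul 4))
      (by norm_num; ring)
  have hP2 : ∀ x : ℝ, HasDerivAt (fun y : ℝ => 12 * y ^ 2 - 4) (24 * x) x := fun x =>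
    hda_congr (((hasDerivAt_pow 2 x).const_mul 12).sub_const 4) (by norm_num; ring)
  have hP3 : ∀ x : ℝ, HasDerivAt (fun y : ℝ => 8 * y ^ 3 - 8 * y) (24 * x ^ 2 - 8) x := fun x =>
    hda_congr (((hasDerivAt_pow 3 x).const_mul 8).sub ((hasDerivAt_id x).const_mul 8))
      (by norm_num; ring)
  -- G and its derivatives
  have hG' : ∀ x : ℝ, HasDerivAt (fun y : ℝ => (1 - y ^ 2) * u1 y)
      (-(2 * x) * u1 x + (1 - x ^ 2) * u2 x) x := fun x => (hQ x).mul (h2 x)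
  have hg1' : ∀ x : ℝ, HasDerivAt (fun x : ℝ => -(2 * x) * u1 x + (1 - x ^ 2) * u2 x)
      (-2 * u1 x - 4 * x * u2 x + (1 - x ^ 2) * u3 x) x := by
    intro x
    have hL : HasDerivAt (fun y : ℝ => -(2 * y)) (-2 : ℝ) x := by
      exact hda_congr (((hasDerivAt_id x).const_mul (2 : ℝ)).neg) (by norm_num)
    exact hda_congr ((hL.mul (h2 x)).add ((hQ x).mul (h3 x))) (by ring)
  have hg2' : ∀ x : ℝ, HasDerivAt (fun x : ℝ => -2 * u1 x - 4 * x * u2 x + (1 - x ^ 2) * u3 x)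
      (-6 * u2 x - 6 * x * u3 x + (1 - x ^ 2) * u4 x) x := by
    intro x
    have hA : HasDerivAt (fun y : ℝ => -2 * u1 y) (-2 * u2 x) x := (h2 x).const_mul (-2)
    have hL4 : HasDerivAt (fun y : ℝ => 4 * y) (4 : ℝ) x := by
      simpa using (hasDerivAt_id x).const_mul (4 : ℝ)
    have hB : HasDerivAt (fun y : ℝ => 4 * y * u2 y) (4 * u2 x + 4 * x * u3 x) x :=
      hda_congr (hL4.mul (h3 x)) (by ring)
    exact hda_congr ((hA.sub hB).add ((hQ x).mul (h4 x))) (by ring)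
  -- F = (1-x²)²u' and its three derivatives
  have hF' : ∀ x : ℝ, HasDerivAt (fun y : ℝ => (1 - y ^ 2) ^ 2 * u1 y)
      ((4 * x ^ 3 - 4 * x) * u1 x + (1 - x ^ 2) ^ 2 * u2 x) x := fun x => (hQ2 x).mul (h2 x)
  have hf1' : ∀ x : ℝ, HasDerivAt
      (fun x : ℝ => (4 * x ^ 3 - 4 * x) * u1 x + (1 - x ^ 2) ^ 2 * u2 x)
      ((12 * x ^ 2 - 4) * u1 x + (8 * x ^ 3 - 8 * x) * u2 x + (1 - x ^ 2) ^ 2 * u3 x) x :=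
    fun x => hda_congr (((hP1 x).mul (h2 x)).add ((hQ2 x).mul (h3 x))) (by ring)
  have hf2' : ∀ x : ℝ, HasDerivAt
      (fun x : ℝ => (12 * x ^ 2 - 4) * u1 x + (8 * x ^ 3 - 8 * x) * u2 x
        + (1 - x ^ 2) ^ 2 * u3 x)
      (24 * x * u1 x + (36 * x ^ 2 - 12) * u2 x + (12 * x ^ 3 - 12 * x) * u3 x
        + (1 - x ^ 2) ^ 2 * u4 x) x :=
    fun x => hda_congr ((((hP2 x).mul (h2 x)).add ((hP3 x).mul (h3 x))).add
      ((hQ2 x).mul (h4 x))) (by ring)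
  have hIter : iteratedDeriv 3 (fun y : ℝ => (1 - y ^ 2) ^ 2 * u1 y)
      = fun x => 24 * x * u1 x + (36 * x ^ 2 - 12) * u2 x + (12 * x ^ 3 - 12 * x) * u3 x
        + (1 - x ^ 2) ^ 2 * u4 x := by
    have e1 : deriv (fun y : ℝ => (1 - y ^ 2) ^ 2 * u1 y)
        = fun x => (4 * x ^ 3 - 4 * x) * u1 x + (1 - x ^ 2) ^ 2 * u2 x :=
      funext fun x => (hF' x).deriv
    have e2 : deriv (fun x : ℝ => (4 * x ^ 3 - 4 * x) * u1 x + (1 - x ^ 2) ^ 2 * u2 x)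
        = fun x => (12 * x ^ 2 - 4) * u1 x + (8 * x ^ 3 - 8 * x) * u2 x
          + (1 - x ^ 2) ^ 2 * u3 x :=
      funext fun x => (hf1' x).deriv
    have e3 : deriv (fun x : ℝ => (12 * x ^ 2 - 4) * u1 x + (8 * x ^ 3 - 8 * x) * u2 x
          + (1 - x ^ 2) ^ 2 * u3 x)
        = fun x => 24 * x * u1 x + (36 * x ^ 2 - 12) * u2 x + (12 * x ^ 3 - 12 * x) * u3 x
          + (1 - x ^ 2) ^ 2 * u4 x :=
      funext fun x => (hf2' x).deriv
    rw [show (3 : ℕ) = 2 + 1 from rfl, iteratedDeriv_succ,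
      show (2 : ℕ) = 1 + 1 from rfl, iteratedDeriv_succ, iteratedDeriv_one, e1, e2, e3]
  -- derivative of ψ = (1-x²)³ G''
  have hψ' : ∀ x : ℝ, HasDerivAt
      (fun x : ℝ => (1 - x ^ 2) ^ 3 * (-2 * u1 x - 4 * x * u2 x + (1 - x ^ 2) * u3 x))
      ((1 - x ^ 2) ^ 2 * ((24 * x * u1 x + (36 * x ^ 2 - 12) * u2 x
        + (12 * x ^ 3 - 12 * x) * u3 x + (1 - x ^ 2) ^ 2 * u4 x)
        + 6 * (-(2 * x) * u1 x + (1 - x ^ 2) * u2 x))) x :=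
    fun x => hda_congr (((hQ x).pow 3).mul (hg2' x)) (by norm_num; ring)
  -- positivity of dψ where G' ≥ 1/α
  have hψpos : ∀ x ∈ Set.Ioo (-1 : ℝ) 1,
      1 / α ≤ -(2 * x) * u1 x + (1 - x ^ 2) * u2 x →
      0 < (1 - x ^ 2) ^ 2 * ((24 * x * u1 x + (36 * x ^ 2 - 12) * u2 x
        + (12 * x ^ 3 - 12 * x) * u3 x + (1 - x ^ 2) ^ 2 * u4 x)
        + 6 * (-(2 * x) * u1 x + (1 - x ^ 2) * u2 x)) := by
    intro x hx hge
    have hode' := hode x hx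
    rw [hIter] at hode'
    have hx2 : 0 < 1 - x ^ 2 := by nlinarith [hx.1, hx.2]
    have hexp : 0 < 8 / γ * Real.exp (4 * u x) := by positivity
    have hone : 1 ≤ (-(2 * x) * u1 x + (1 - x ^ 2) * u2 x) * α := (div_le_iff₀ hα).mp hge
    have hS : 0 < α * ((24 * x * u1 x + (36 * x ^ 2 - 12) * u2 x
        + (12 * x ^ 3 - 12 * x) * u3 x + (1 - x ^ 2) ^ 2 * u4 x)
        + 6 * (-(2 * x) * u1 x + (1 - x ^ 2) * u2 x)) := by nlinarith [hexp, hone]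
    have hS' : 0 < (24 * x * u1 x + (36 * x ^ 2 - 12) * u2 x
        + (12 * x ^ 3 - 12 * x) * u3 x + (1 - x ^ 2) ^ 2 * u4 x)
        + 6 * (-(2 * x) * u1 x + (1 - x ^ 2) * u2 x) := by
      by_contra hc
      push_neg at hc
      nlinarith [mul_nonneg hα.le (neg_nonneg.mpr hc)]
    exact mul_pos (pow_pos hx2 2) hS'
  -- conclude
  intro x hx
  have hDG : deriv (fun y : ℝ => (1 - y ^ 2) * u1 y)
      = fun x => -(2 * x) * u1 x + (1 - x ^ 2) * u2 x := funext fun x => (hG' x).deriv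
  rw [hDG]
  exact max_principle α hα
    (fun x => -(2 * x) * u1 x + (1 - x ^ 2) * u2 x)
    (fun x => -2 * u1 x - 4 * x * u2 x + (1 - x ^ 2) * u3 x)
    (fun x => (1 - x ^ 2) ^ 3 * (-2 * u1 x - 4 * x * u2 x + (1 - x ^ 2) * u3 x))
    (fun x => (1 - x ^ 2) ^ 2 * ((24 * x * u1 x + (36 * x ^ 2 - 12) * u2 x
        + (12 * x ^ 3 - 12 * x) * u3 x + (1 - x ^ 2) ^ 2 * u4 x)
        + 6 * (-(2 * x) * u1 x + (1 - x ^ 2) * u2 x)))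
    hg1' hψ' (fun x => rfl) hψpos x hx

/-- Lemma 3.2: the derivative of `G = (1-x²)u'` is bounded above by `1/α` on `[-1,1]`. -/
theorem deriv_G_upper_bound (α : ℝ) (hα : 0 < α)
    (u : ℝ → ℝ) (hu : ContDiff ℝ (⊤ : ℕ∞) u)
    (γ : ℝ) (hγ : γ = ∫ x in (-1 : ℝ)..1, (1 - x ^ 2) * Real.exp (4 * u x))
    (hode : ∀ x ∈ Set.Ioo (-1 : ℝ) 1,
      α * iteratedDeriv 3 (fun y : ℝ => (1 - y ^ 2) ^ 2 * deriv u y) x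
        + 6 - (8 / γ) * Real.exp (4 * u x) = 0) :
    ∀ x ∈ Set.Icc (-1 : ℝ) 1,
      deriv (fun y : ℝ => (1 - y ^ 2) * deriv u y) x ≤ 1 / α := by
  have hu0 : ContDiff ℝ (⊤ : ℕ∞) u := hu.of_le (by simp)
  have c1 : ContDiff ℝ (⊤ : ℕ∞) (deriv u) := (contDiff_infty_iff_deriv.mp hu0).2
  have c2 : ContDiff ℝ (⊤ : ℕ∞) (deriv (deriv u)) := (contDiff_infty_iff_deriv.mp c1).2
  have c3 : ContDiff ℝ (⊤ : ℕ∞) (deriv (deriv (deriv u))) := (contDiff_infty_iff_deriv.mp c2).2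
  have h2 : ∀ x, HasDerivAt (deriv u) (deriv (deriv u) x) x := fun x =>
    ((contDiff_infty_iff_deriv.mp c1).1 x).hasDerivAt
  have h3 : ∀ x, HasDerivAt (deriv (deriv u)) (deriv (deriv (deriv u)) x) x := fun x =>
    ((contDiff_infty_iff_deriv.mp c2).1 x).hasDerivAt
  have h4 : ∀ x, HasDerivAt (deriv (deriv (deriv u)))
      (deriv (deriv (deriv (deriv u))) x) x := fun x =>
    ((contDiff_infty_iff_deriv.mp c3).1 x).hasDerivAt
  have hcont : Continuous fun x : ℝ => (1 - x ^ 2) * Real.exp (4 * u x) :=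
    (continuous_const.sub (continuous_pow 2)).mul
      (Real.continuous_exp.comp (continuous_const.mul hu.continuous))
  have hγpos : 0 < γ := by
    rw [hγ]
    apply intervalIntegral.intervalIntegral_pos_of_pos_on (hcont.intervalIntegrable _ _) ?_ (by norm_num)
    intro x hx
    have h1 : 0 < 1 - x ^ 2 := by nlinarith [hx.1, hx.2]
    positivity
  exact key_lemma α γ hα hγpos u (deriv u) (deriv (deriv u)) (deriv (deriv (deriv u)))
    (deriv (deriv (deriv (deriv u)))) h2 h3 h4 hode
end

section
/- Let α > 0, and suppose G : [-1,1] → ℝ is smooth with G(±1) = 0, G'(x) ≤ 1/α on [-1,1], and G satisfies ∫_{-1}^1 (1-x^2)[(1-x^2)^2 G']''' G dx + 6∫_{-1}^1 |[(1-x^2)G]'|^2 dx - (24/α)∫_{-1}^1 (1-x^2)G^2 dx - 4∫_{-1}^1 (1-x^2)^2 (G')^3 dx = 0. Then ∫_{-1}^1 (1-x^2)[(1-x^2)^2 G']''' G dx ≤ (4/α - 6)∫_{-1}^1 |[(1-x^2)G]'|^2 dx + (16/α)∫_{-1}^1 (1-x^2)G^2 dx. -/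
/-- Lemma 3.3 (key energy estimate): under the gradient bound `G' ≤ 1/α` and
the integral identity (3.16), one has
`⌊G⌋² ≤ (4/α - 6)∫|[(1-x²)G]'|² + (16/α)∫(1-x²)G²`. -/
theorem key_energy_estimate (α : ℝ) (hα : 0 < α)
    (G : ℝ → ℝ) (hG : ContDiff ℝ (⊤ : ℕ∞) G) (hGm : G (-1) = 0) (hGp : G 1 = 0)
    (hbound : ∀ x ∈ Set.Icc (-1 : ℝ) 1, deriv G x ≤ 1 / α)
    (hidentity :
      (∫ x in (-1 : ℝ)..1,
          (1 - x ^ 2) * iteratedDeriv 3 (fun y : ℝ => (1 - y ^ 2) ^ 2 * deriv G y) x * G x)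
        + 6 * (∫ x in (-1 : ℝ)..1, (deriv (fun y : ℝ => (1 - y ^ 2) * G y) x) ^ 2)
        - (24 / α) * (∫ x in (-1 : ℝ)..1, (1 - x ^ 2) * G x ^ 2)
        - 4 * (∫ x in (-1 : ℝ)..1, (1 - x ^ 2) ^ 2 * (deriv G x) ^ 3) = 0) :
    (∫ x in (-1 : ℝ)..1,
        (1 - x ^ 2) * iteratedDeriv 3 (fun y : ℝ => (1 - y ^ 2) ^ 2 * deriv G y) x * G x)
      ≤ (4 / α - 6) * (∫ x in (-1 : ℝ)..1, (deriv (fun y : ℝ => (1 - y ^ 2) * G y) x) ^ 2)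
        + (16 / α) * ∫ x in (-1 : ℝ)..1, (1 - x ^ 2) * G x ^ 2 := by
  have hαne : α ≠ 0 := ne_of_gt hα
  have cG : Continuous G := hG.continuous
  have cG' : Continuous (deriv G) := hG.continuous_deriv (by simp)
  have hGd : ∀ x : ℝ, HasDerivAt G (deriv G x) x :=
    fun x => (hG.differentiable (by simp) x).hasDerivAt
  -- derivative of (1-x²)G
  have h1 : ∀ x : ℝ, HasDerivAt (fun y : ℝ => (1 - y ^ 2) * G y)
      ((-2 * x) * G x + (1 - x ^ 2) * deriv G x) x := by
    intro x
    have ha : HasDerivAt (fun y : ℝ => 1 - y ^ 2) (-2 * x) x := by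
      have := (hasDerivAt_pow 2 x).const_sub 1
      exact this.congr_deriv (by push_cast; ring)
    exact ha.mul (hGd x)
  have hHd : deriv (fun y : ℝ => (1 - y ^ 2) * G y)
      = fun x => (-2 * x) * G x + (1 - x ^ 2) * deriv G x :=
    funext fun x => (h1 x).deriv
  -- derivative of F(y) = (2y - 2y³) G(y)²
  have hF : ∀ x : ℝ, HasDerivAt (fun y : ℝ => (2 * y - 2 * y ^ 3) * G y ^ 2)
      ((2 - 6 * x ^ 2) * G x ^ 2 + (2 * x - 2 * x ^ 3) * (2 * G x * deriv G x)) x := by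
    intro x
    have hp : HasDerivAt (fun y : ℝ => 2 * y - 2 * y ^ 3) (2 - 6 * x ^ 2) x := by
      have : HasDerivAt (fun y : ℝ => 2 * y - 2 * y ^ 3)
          (2 * 1 - 2 * ((3 : ℕ) * x ^ (3 - 1))) x :=
        ((hasDerivAt_id x).const_mul 2).sub ((hasDerivAt_pow 3 x).const_mul 2)
      convert this using 1
      push_cast; ring
    have hq : HasDerivAt (fun y : ℝ => G y ^ 2) (2 * G x * deriv G x) x := by
      have := (hGd x).pow 2
      exact this.congr_deriv (by push_cast; ring)
    exact hp.mul hq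
  -- integral of the exact derivative vanishes
  have hint0 : (∫ x in (-1 : ℝ)..1,
      ((2 - 6 * x ^ 2) * G x ^ 2 + (2 * x - 2 * x ^ 3) * (2 * G x * deriv G x))) = 0 := by
    rw [intervalIntegral.integral_eq_sub_of_hasDerivAt (fun x _ => hF x)
      (Continuous.intervalIntegrable (by fun_prop) _ _)]
    norm_num
  -- integration-by-parts identity: B = Q + 2C
  have hB : (∫ x in (-1 : ℝ)..1, (deriv (fun y : ℝ => (1 - y ^ 2) * G y) x) ^ 2)
      = (∫ x in (-1 : ℝ)..1, (1 - x ^ 2) ^ 2 * (deriv G x) ^ 2)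
        + 2 * (∫ x in (-1 : ℝ)..1, (1 - x ^ 2) * G x ^ 2) := by
    have hcongr : (∫ x in (-1 : ℝ)..1, (deriv (fun y : ℝ => (1 - y ^ 2) * G y) x) ^ 2)
        = ∫ x in (-1 : ℝ)..1,
            (((1 - x ^ 2) ^ 2 * (deriv G x) ^ 2 + 2 * ((1 - x ^ 2) * G x ^ 2))
            - ((2 - 6 * x ^ 2) * G x ^ 2 + (2 * x - 2 * x ^ 3) * (2 * G x * deriv G x))) := by
      apply intervalIntegral.integral_congr
      intro x _
      rw [hHd]; ring
    rw [hcongr, intervalIntegral.integral_sub (Continuous.intervalIntegrable (by fun_prop) _ _)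
        (Continuous.intervalIntegrable (by fun_prop) _ _), hint0,
      intervalIntegral.integral_add (Continuous.intervalIntegrable (by fun_prop) _ _)
        (Continuous.intervalIntegrable (by fun_prop) _ _),
      intervalIntegral.integral_const_mul]
    ring
  -- pointwise cubic bound gives P ≤ (1/α) Q
  have hPQ : (∫ x in (-1 : ℝ)..1, (1 - x ^ 2) ^ 2 * (deriv G x) ^ 3)
      ≤ ∫ x in (-1 : ℝ)..1, (1 / α) * ((1 - x ^ 2) ^ 2 * (deriv G x) ^ 2) := by
    apply intervalIntegral.integral_mono_on (by norm_num)
      (Continuous.intervalIntegrable (by fun_prop) _ _)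
      (Continuous.intervalIntegrable (by fun_prop) _ _)
    intro x hx
    have hd := hbound x hx
    have h2 : (deriv G x) ^ 3 ≤ (1 / α) * (deriv G x) ^ 2 := by
      nlinarith [sq_nonneg (deriv G x),
        mul_nonneg (sub_nonneg.2 hd) (sq_nonneg (deriv G x))]
    calc (1 - x ^ 2) ^ 2 * (deriv G x) ^ 3
        ≤ (1 - x ^ 2) ^ 2 * ((1 / α) * (deriv G x) ^ 2) :=
          mul_le_mul_of_nonneg_left h2 (sq_nonneg _)
      _ = (1 / α) * ((1 - x ^ 2) ^ 2 * (deriv G x) ^ 2) := by ring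
  rw [intervalIntegral.integral_const_mul] at hPQ
  -- abbreviate
  set A := (∫ x in (-1 : ℝ)..1,
      (1 - x ^ 2) * iteratedDeriv 3 (fun y : ℝ => (1 - y ^ 2) ^ 2 * deriv G y) x * G x) with hAdef
  set B := (∫ x in (-1 : ℝ)..1, (deriv (fun y : ℝ => (1 - y ^ 2) * G y) x) ^ 2) with hBdef
  set C := (∫ x in (-1 : ℝ)..1, (1 - x ^ 2) * G x ^ 2) with hCdef
  set P := (∫ x in (-1 : ℝ)..1, (1 - x ^ 2) ^ 2 * (deriv G x) ^ 3) with hPdef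
  set Q := (∫ x in (-1 : ℝ)..1, (1 - x ^ 2) ^ 2 * (deriv G x) ^ 2) with hQdef
  have hRHS : (4 / α - 6) * B + 16 / α * C = -6 * B + 24 / α * C + 4 * (1 / α * Q) := by
    rw [hB]; field_simp; ring
  have hP4 : 4 * P ≤ 4 * (1 / α * Q) := by linarith
  linarith [hidentity, hRHS, hP4]
end

section
/- Let u be a smooth axially symmetric solution of (1/5) P_4 u + 6(1 - e^{4u}) = 0 on S^4 normalized by ∫_{S^4} e^{4u} dw = 1. Then u satisfies the Pohozaev identity ∫_{-1}^1 |[(1-x^2)^2 u'(x)]'|^2 dx = (4/(5α))(5 - 1/α) ∫_{-1}^1 (1-x^2) e^{4u} F_2(x) dx with α = 1/5; the right-hand side is therefore 0, and consequently u is constant. -/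
open MeasureTheory Set intervalIntegral

/-- Theorem 1.3: at `α = 1/5`, an axially symmetric solution of the normalized constant
`Q`-curvature type equation satisfies the Pohozaev identity
`∫|((1-x²)²u')'|² = (4/(5α))(5 - 1/α)∫(1-x²)e^{4u}F₂`, whose right-hand side vanishes,
and consequently `u` is constant. -/
theorem alpha_one_fifth_classification
    (u : ℝ → ℝ) (hu : ContDiff ℝ (⊤ : ℕ∞) u)
    (hnorm : (3 / 4) * ∫ x in (-1 : ℝ)..1, (1 - x ^ 2) * Real.exp (4 * u x) = 1)
    (hode : ∀ x ∈ Set.Ioo (-1 : ℝ) 1,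
      (1 / 5) * (1 - x ^ 2)
          * iteratedDeriv 3 (fun y : ℝ => (1 - y ^ 2) ^ 2 * deriv u y) x
        + 6 * (1 - x ^ 2) * (1 - Real.exp (4 * u x)) = 0) :
    ((∫ x in (-1 : ℝ)..1, (deriv (fun y : ℝ => (1 - y ^ 2) ^ 2 * deriv u y) x) ^ 2)
        = (4 / (5 * (1 / 5))) * (5 - 1 / (1 / 5))
            * ∫ x in (-1 : ℝ)..1,
                (1 - x ^ 2) * Real.exp (4 * u x) * ((5 * x ^ 2 - 1) / 4)) ∧
    (∀ x ∈ Set.Icc (-1 : ℝ) 1, ∀ y ∈ Set.Icc (-1 : ℝ) 1, u x = u y) := by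
  have hle : (-1:ℝ) ≤ 1 := by norm_num
  set f : ℝ → ℝ := fun y : ℝ => (1 - y ^ 2) ^ 2 * deriv u y with hfdef
  -- smoothness
  have hD : ∀ g : ℝ → ℝ, ContDiff ℝ (⊤ : ℕ∞) g → ContDiff ℝ (⊤ : ℕ∞) (deriv g) := fun g hg =>
    (contDiff_succ_iff_deriv.mp (hg.of_le (by simp))).2.2
  have hu1 : ContDiff ℝ (⊤ : ℕ∞) (deriv u) := hD u hu
  have hf : ContDiff ℝ (⊤ : ℕ∞) f := by
    rw [hfdef]; exact ((contDiff_const.sub (contDiff_id.pow 2)).pow 2).mul hu1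
  have hf1 : ContDiff ℝ (⊤ : ℕ∞) (deriv f) := hD f hf
  have hf2 : ContDiff ℝ (⊤ : ℕ∞) (deriv (deriv f)) := hD _ hf1
  have hf3 : ContDiff ℝ (⊤ : ℕ∞) (deriv (deriv (deriv f))) := hD _ hf2
  have hfc : Continuous f := hf.continuous
  have hg1c : Continuous (deriv f) := hf1.continuous
  have hg2c : Continuous (deriv (deriv f)) := hf2.continuous
  have hg3c : Continuous (deriv (deriv (deriv f))) := hf3.continuous
  have hEc : Continuous (fun x : ℝ => Real.exp (4 * u x)) :=
    Real.continuous_exp.comp (continuous_const.mul hu.continuous)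
  -- HasDerivAt facts
  have hdf : ∀ x : ℝ, HasDerivAt f (deriv f x) x :=
    fun x => (hf.differentiable (by simp) x).hasDerivAt
  have hdf1 : ∀ x : ℝ, HasDerivAt (deriv f) (deriv (deriv f) x) x :=
    fun x => (hf1.differentiable (by simp) x).hasDerivAt
  have hdf2 : ∀ x : ℝ, HasDerivAt (deriv (deriv f)) (deriv (deriv (deriv f)) x) x :=
    fun x => (hf2.differentiable (by simp) x).hasDerivAt
  have hdu : ∀ x : ℝ, HasDerivAt u (deriv u x) x :=
    fun x => (hu.differentiable (by simp) x).hasDerivAt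
  have hdE : ∀ x : ℝ, HasDerivAt (fun y : ℝ => Real.exp (4 * u y))
      (Real.exp (4 * u x) * (4 * deriv u x)) x :=
    fun x => ((hdu x).const_mul 4).exp
  -- boundary values of f
  have hfb : ∀ x : ℝ, x ^ 2 = 1 → f x = 0 := by
    intro x hx; rw [hfdef]; simp only; rw [hx]; ring
  -- formula for deriv f, and boundary values
  have hquad : ∀ x : ℝ, HasDerivAt (fun y : ℝ => (1 - y ^ 2) ^ 2) (2 * (1 - x ^ 2) * (0 - 2 * x)) x := by
    intro x
    have h : HasDerivAt (fun y : ℝ => (1 - y ^ 2) ^ 2) (((2:ℕ):ℝ) * (1 - x ^ 2) ^ (2 - 1) * (0 - ((2:ℕ):ℝ) * x ^ (2 - 1))) x := ((hasDerivAt_const x (1:ℝ)).sub (hasDerivAt_pow 2 x)).pow 2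
    convert h using 1; push_cast; ring
  have hdf' : ∀ x : ℝ, HasDerivAt f
      ((2 * (1 - x ^ 2) * (0 - 2 * x)) * deriv u x + (1 - x ^ 2) ^ 2 * deriv (deriv u) x) x := by
    intro x
    have h2 : HasDerivAt (deriv u) (deriv (deriv u) x) x := (hu1.differentiable (by simp) x).hasDerivAt
    rw [hfdef]; exact (hquad x).mul h2
  have hg1b : ∀ x : ℝ, x ^ 2 = 1 → deriv f x = 0 := by
    intro x hx
    rw [(hdf' x).deriv, hx]; ring
  -- the ODE for the third derivative, on Icc
  have h3eq : iteratedDeriv 3 f = deriv (deriv (deriv f)) := by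
    rw [show (3:ℕ) = 2 + 1 from rfl, iteratedDeriv_succ,
      show (2:ℕ) = 1 + 1 from rfl, iteratedDeriv_succ,
      show (1:ℕ) = 0 + 1 from rfl, iteratedDeriv_succ, iteratedDeriv_zero]
  have hODE : Set.EqOn (deriv (deriv (deriv f)))
      (fun x => 30 * (Real.exp (4 * u x) - 1)) (Set.Icc (-1:ℝ) 1) := by
    have hIoo : Set.EqOn (deriv (deriv (deriv f)))
        (fun x => 30 * (Real.exp (4 * u x) - 1)) (Set.Ioo (-1:ℝ) 1) := by
      intro x hx
      have heq := hode x hx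
      rw [h3eq] at heq
      have hpos : (0:ℝ) < 1 - x ^ 2 := by nlinarith [hx.1, hx.2]
      have hz : (1 - x ^ 2) * (deriv (deriv (deriv f)) x - 30 * (Real.exp (4 * u x) - 1)) = 0 := by
        linear_combination 5 * heq
      rcases mul_eq_zero.mp hz with h | h
      · exact absurd h (ne_of_gt hpos)
      · show deriv (deriv (deriv f)) x = 30 * (Real.exp (4 * u x) - 1)
        linarith
    have h := hIoo.closure hg3c (continuous_const.mul (hEc.sub continuous_const))
    rwa [closure_Ioo (by norm_num : (-1:ℝ) ≠ 1)] at h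
  -- combined antiderivative
  set H : ℝ → ℝ := fun y : ℝ =>
      (y * f y * deriv (deriv f) y - f y * deriv f y - 1/2 * (y * deriv f y ^ 2))
      - 30 * (1/4 * (y * (1 - y ^ 2) ^ 2 * Real.exp (4 * u y)))
      - 5/4 * (y ^ 2 * (1 - y ^ 2) * deriv (deriv f) y - (2 * y - 4 * y ^ 3) * deriv f y
          + (2 - 12 * y ^ 2) * f y) with hHdef
  have hH : ∀ x : ℝ, HasDerivAt H
      ((x * f x * deriv (deriv (deriv f)) x - 3/2 * deriv f x ^ 2)
        - 30 * (x * f x * Real.exp (4 * u x)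
            - (1 - x ^ 2) * Real.exp (4 * u x) * ((5 * x ^ 2 - 1) / 4))
        - 5/4 * (x ^ 2 * (1 - x ^ 2) * deriv (deriv (deriv f)) x - 24 * (x * f x))) x := by
    intro x
    have A : HasDerivAt (fun y : ℝ => y * f y * deriv (deriv f) y)
        ((1 * f x + x * deriv f x) * deriv (deriv f) x + x * f x * deriv (deriv (deriv f)) x) x :=
      ((hasDerivAt_id' x).mul (hdf x)).mul (hdf2 x)
    have B : HasDerivAt (fun y : ℝ => f y * deriv f y)
        (deriv f x * deriv f x + f x * deriv (deriv f) x) x := (hdf x).mul (hdf1 x)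
    have C : HasDerivAt (fun y : ℝ => 1/2 * (y * deriv f y ^ 2))
        (1/2 * (1 * deriv f x ^ 2 + x * ((2:ℕ) * deriv f x ^ (2 - 1) * deriv (deriv f) x))) x :=
      ((hasDerivAt_id' x).mul ((hdf1 x).pow 2)).const_mul (1/2)
    have P : HasDerivAt (fun y : ℝ => y * (1 - y ^ 2) ^ 2)
        (1 * (1 - x ^ 2) ^ 2 + x * (2 * (1 - x ^ 2) * (0 - 2 * x))) x :=
      (hasDerivAt_id' x).mul (hquad x)
    have Phi : HasDerivAt (fun y : ℝ => 30 * (1/4 * (y * (1 - y ^ 2) ^ 2 * Real.exp (4 * u y))))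
        (30 * (1/4 * ((1 * (1 - x ^ 2) ^ 2 + x * (2 * (1 - x ^ 2) * (0 - 2 * x))) * Real.exp (4 * u x)
          + x * (1 - x ^ 2) ^ 2 * (Real.exp (4 * u x) * (4 * deriv u x))))) x :=
      ((P.mul (hdE x)).const_mul (1/4)).const_mul 30
    have hq : HasDerivAt (fun y : ℝ => y ^ 2 * (1 - y ^ 2))
        ((2:ℕ) * x ^ (2 - 1) * (1 - x ^ 2) + x ^ 2 * (0 - (2:ℕ) * x ^ (2 - 1))) x :=
      (hasDerivAt_pow 2 x).mul ((hasDerivAt_const x (1:ℝ)).sub (hasDerivAt_pow 2 x))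
    have hq1 : HasDerivAt (fun y : ℝ => 2 * y - 4 * y ^ 3)
        (2 * 1 - 4 * ((3:ℕ) * x ^ (3 - 1))) x :=
      ((hasDerivAt_id' x).const_mul 2).sub ((hasDerivAt_pow 3 x).const_mul 4)
    have hq2 : HasDerivAt (fun y : ℝ => 2 - 12 * y ^ 2)
        (0 - 12 * ((2:ℕ) * x ^ (2 - 1))) x :=
      (hasDerivAt_const x (2:ℝ)).sub ((hasDerivAt_pow 2 x).const_mul 12)
    have Psi : HasDerivAt (fun y : ℝ => 5/4 * (y ^ 2 * (1 - y ^ 2) * deriv (deriv f) y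
        - (2 * y - 4 * y ^ 3) * deriv f y + (2 - 12 * y ^ 2) * f y))
        (5/4 * ((((2:ℕ) * x ^ (2 - 1) * (1 - x ^ 2) + x ^ 2 * (0 - (2:ℕ) * x ^ (2 - 1))) * deriv (deriv f) x
            + x ^ 2 * (1 - x ^ 2) * deriv (deriv (deriv f)) x)
          - ((2 * 1 - 4 * ((3:ℕ) * x ^ (3 - 1))) * deriv f x + (2 * x - 4 * x ^ 3) * deriv (deriv f) x)
          + ((0 - 12 * ((2:ℕ) * x ^ (2 - 1))) * f x + (2 - 12 * x ^ 2) * deriv f x))) x :=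
      (((hq.mul (hdf2 x)).sub (hq1.mul (hdf1 x))).add (hq2.mul (hdf x))).const_mul (5/4)
    have total := ((A.sub B).sub C).sub Phi |>.sub Psi
    rw [hHdef]
    refine total.congr_deriv ?_
    simp only [hfdef]
    push_cast
    ring
  have hcont : Continuous (fun x : ℝ =>
      (x * f x * deriv (deriv (deriv f)) x - 3/2 * deriv f x ^ 2)
        - 30 * (x * f x * Real.exp (4 * u x)
            - (1 - x ^ 2) * Real.exp (4 * u x) * ((5 * x ^ 2 - 1) / 4))
        - 5/4 * (x ^ 2 * (1 - x ^ 2) * deriv (deriv (deriv f)) x - 24 * (x * f x))) := by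
    fun_prop
  have key : (∫ x in (-1:ℝ)..1,
      ((x * f x * deriv (deriv (deriv f)) x - 3/2 * deriv f x ^ 2)
        - 30 * (x * f x * Real.exp (4 * u x)
            - (1 - x ^ 2) * Real.exp (4 * u x) * ((5 * x ^ 2 - 1) / 4))
        - 5/4 * (x ^ 2 * (1 - x ^ 2) * deriv (deriv (deriv f)) x - 24 * (x * f x)))) = H 1 - H (-1) :=
    intervalIntegral.integral_eq_sub_of_hasDerivAt (fun x _ => hH x) (hcont.intervalIntegrable _ _)
  have hbdry : H 1 - H (-1) = 0 := by
    have h1 : f 1 = 0 := hfb 1 (by norm_num)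
    have h2 : f (-1) = 0 := hfb (-1) (by norm_num)
    have h3 : deriv f 1 = 0 := hg1b 1 (by norm_num)
    have h4 : deriv f (-1) = 0 := hg1b (-1) (by norm_num)
    rw [hHdef]
    simp only
    rw [h1, h2, h3, h4]
    norm_num
  have hsubst : (∫ x in (-1:ℝ)..1,
      ((x * f x * deriv (deriv (deriv f)) x - 3/2 * deriv f x ^ 2)
        - 30 * (x * f x * Real.exp (4 * u x)
            - (1 - x ^ 2) * Real.exp (4 * u x) * ((5 * x ^ 2 - 1) / 4))
        - 5/4 * (x ^ 2 * (1 - x ^ 2) * deriv (deriv (deriv f)) x - 24 * (x * f x))))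
      = ∫ x in (-1:ℝ)..1, (-(3/2) * deriv f x ^ 2
          - 15/2 * ((1 - x ^ 2) * Real.exp (4 * u x)) + 75/2 * (x ^ 2 * (1 - x ^ 2))) := by
    apply intervalIntegral.integral_congr
    intro x hx
    rw [Set.uIcc_of_le hle] at hx
    have h30 := hODE hx
    simp only at h30 ⊢
    rw [h30]
    ring
  have hsplit : (∫ x in (-1:ℝ)..1, (-(3/2) * deriv f x ^ 2
          - 15/2 * ((1 - x ^ 2) * Real.exp (4 * u x)) + 75/2 * (x ^ 2 * (1 - x ^ 2))))
      = -(3/2) * (∫ x in (-1:ℝ)..1, deriv f x ^ 2)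
        - 15/2 * (∫ x in (-1:ℝ)..1, (1 - x ^ 2) * Real.exp (4 * u x))
        + 75/2 * (∫ x in (-1:ℝ)..1, x ^ 2 * (1 - x ^ 2)) := by
    rw [intervalIntegral.integral_add, intervalIntegral.integral_sub,
      intervalIntegral.integral_const_mul, intervalIntegral.integral_const_mul,
      intervalIntegral.integral_const_mul]
    · exact (continuous_const.mul (hg1c.pow 2)).intervalIntegrable _ _
    · exact (continuous_const.mul ((continuous_const.sub (continuous_pow 2)).mul hEc)).intervalIntegrable _ _
    · exact ((continuous_const.mul (hg1c.pow 2)).sub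
        (continuous_const.mul ((continuous_const.sub (continuous_pow 2)).mul hEc))).intervalIntegrable _ _
    · exact (continuous_const.mul ((continuous_pow 2).mul (continuous_const.sub (continuous_pow 2)))).intervalIntegrable _ _
  have hpoly : (∫ x in (-1:ℝ)..1, x ^ 2 * (1 - x ^ 2)) = 4/15 := by
    have hP : ∀ x : ℝ, HasDerivAt (fun y : ℝ => y ^ 3 / 3 - y ^ 5 / 5) (x ^ 2 * (1 - x ^ 2)) x := by
      intro x
      have h : HasDerivAt (fun y : ℝ => y ^ 3 / 3 - y ^ 5 / 5) _ x := ((hasDerivAt_pow 3 x).div_const 3).sub ((hasDerivAt_pow 5 x).div_const 5)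
      convert h using 1; push_cast; ring
    rw [intervalIntegral.integral_eq_sub_of_hasDerivAt (fun x _ => hP x)
      (((continuous_pow 2).mul (continuous_const.sub (continuous_pow 2))).intervalIntegrable _ _)]
    norm_num
  have hB : (∫ x in (-1:ℝ)..1, (1 - x ^ 2) * Real.exp (4 * u x)) = 4/3 := by linarith
  have hK : (∫ x in (-1:ℝ)..1, deriv f x ^ 2) = 0 := by
    have := key
    rw [hbdry, hsubst, hsplit, hB, hpoly] at this
    linarith
  clear key hbdry hsubst hsplit hH hcont hHdef H hODE h3eq hode
  constructor
  · rw [hK]; norm_num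
  · -- deriv f vanishes on Icc
    have hg1zero : Set.EqOn (deriv f) (fun _ => (0:ℝ)) (Set.Icc (-1:ℝ) 1) := by
      have hIoo : Set.EqOn (deriv f) (fun _ => (0:ℝ)) (Set.Ioo (-1:ℝ) 1) := by
        intro x hx
        by_contra hne
        have hSopen : IsOpen (Set.Ioo (-1:ℝ) 1 ∩ {y | deriv f y ≠ 0}) :=
          isOpen_Ioo.inter (isOpen_ne.preimage hg1c)
        have hSne : (Set.Ioo (-1:ℝ) 1 ∩ {y | deriv f y ≠ 0}).Nonempty := ⟨x, hx, hne⟩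
        have hae : (fun y => deriv f y ^ 2) =ᵐ[volume.restrict (Set.Ioc (-1:ℝ) 1)] 0 :=
          (intervalIntegral.integral_eq_zero_iff_of_le_of_nonneg_ae hle
            (Filter.Eventually.of_forall fun y => sq_nonneg _)
            ((hg1c.pow 2).intervalIntegrable _ _)).mp hK
        have h1 : volume.restrict (Set.Ioc (-1:ℝ) 1) {y | ¬ deriv f y ^ 2 = 0} = 0 := by
          have := MeasureTheory.ae_iff.mp hae
          simpa using this
        have h2 : volume.restrict (Set.Ioc (-1:ℝ) 1) (Set.Ioo (-1:ℝ) 1 ∩ {y | deriv f y ≠ 0}) = 0 :=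
          measure_mono_null (fun y hy => pow_ne_zero 2 hy.2) h1
        have h3 : volume (Set.Ioo (-1:ℝ) 1 ∩ {y | deriv f y ≠ 0}) = 0 := by
          rw [MeasureTheory.Measure.restrict_apply hSopen.measurableSet] at h2
          rwa [Set.inter_eq_self_of_subset_left
            (fun y hy => Set.Ioo_subset_Ioc_self hy.1)] at h2
        exact absurd h3 (hSopen.measure_pos volume hSne).ne'
      have h := hIoo.closure hg1c continuous_const
      rwa [closure_Ioo (by norm_num : (-1:ℝ) ≠ 1)] at h
    -- hence f vanishes on Icc
    have hfzero : ∀ x ∈ Set.Icc (-1:ℝ) 1, f x = 0 := by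
      intro x hx
      have hftc : (∫ t in (-1:ℝ)..x, deriv f t) = f x - f (-1) :=
        intervalIntegral.integral_eq_sub_of_hasDerivAt (fun t _ => hdf t)
          (hg1c.intervalIntegrable _ _)
      have hzero : (∫ t in (-1:ℝ)..x, deriv f t) = 0 := by
        rw [intervalIntegral.integral_congr (g := fun _ => (0:ℝ)) ?_,
          intervalIntegral.integral_zero]
        intro t ht
        rw [Set.uIcc_of_le hx.1] at ht
        exact hg1zero ⟨ht.1, ht.2.trans hx.2⟩
      have hfm1 : f (-1) = 0 := hfb (-1) (by norm_num)
      rw [hzero, hfm1] at hftc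
      linarith
    -- hence deriv u vanishes on Icc
    have hduz : Set.EqOn (deriv u) (fun _ => (0:ℝ)) (Set.Icc (-1:ℝ) 1) := by
      have hIoo : Set.EqOn (deriv u) (fun _ => (0:ℝ)) (Set.Ioo (-1:ℝ) 1) := by
        intro x hx
        have h0 := hfzero x (Set.Ioo_subset_Icc_self hx)
        simp only [hfdef] at h0
        have hne : ((1:ℝ) - x ^ 2) ^ 2 ≠ 0 := by
          have : (0:ℝ) < 1 - x ^ 2 := by nlinarith [hx.1, hx.2]
          positivity
        exact (mul_eq_zero.mp h0).resolve_left hne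
      have h := hIoo.closure hu1.continuous continuous_const
      rwa [closure_Ioo (by norm_num : (-1:ℝ) ≠ 1)] at h
    intro x hx y hy
    have hconst : ∀ z ∈ Set.Icc (-1:ℝ) 1, u z = u (-1) := by
      intro z hz
      have hftc : (∫ t in (-1:ℝ)..z, deriv u t) = u z - u (-1) :=
        intervalIntegral.integral_eq_sub_of_hasDerivAt (fun t _ => hdu t)
          (hu1.continuous.intervalIntegrable _ _)
      have hzero : (∫ t in (-1:ℝ)..z, deriv u t) = 0 := by
        rw [intervalIntegral.integral_congr (g := fun _ => (0:ℝ)) ?_,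
          intervalIntegral.integral_zero]
        intro t ht
        rw [Set.uIcc_of_le hz.1] at ht
        exact hduz ⟨ht.1, ht.2.trans hz.2⟩
      linarith only [hftc, hzero]
    rw [hconst x hx, hconst y hy]
end
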